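/- arXiv:2505.06104 — 7 statements merged into one kernel-verified Lean document; each statement's English description precedes it below -/
import Mathlib

section
/- Fix a nonnegative integer ℓ⁻. For partitions π and σ of the same size with ℓ⁻-decompositions ⟨π⁻,π⁺⟩ and ⟨σ⁻,σ⁺⟩, the following are equivalent: (1) the concatenated sequence (π⁻_1,...,π⁻_{ℓ⁻}, π⁺_1, π⁺_2, ...) is dominated by (σ⁻_1,...,σ⁻_{ℓ⁻}, σ⁺_1, σ⁺_2, ...) in the dominance order on compositions; (2) π⁻ is dominated by σ⁻ in the extended dominance order on partitions of possibly different sizes (i.e. all partial sums of π⁻ are at most those of σ⁻), and moreover |π⁺| ≥ |σ⁺| and π⁺ ⊴ σ⁺ + (|π⁺| − |σ⁺|), where σ⁺ + (|π⁺|−|σ⁺|) means adding |π⁺|−|σ⁺| to the first part of σ⁺. -/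
/-- A partition: a weakly decreasing sequence of naturals with finitely many nonzero parts.
`f i` is the `(i+1)`-st part. -/
def IsPartition (f : ℕ → ℕ) : Prop :=
  (∀ i j, i ≤ j → f j ≤ f i) ∧ ∃ N, ∀ i, N ≤ i → f i = 0

/-- The conjugate partition: `conjFn f j` is the number of parts of `f` that are `> j`,
i.e. the length of column `j+1` of the Young diagram of `f`. -/
noncomputable def conjFn (f : ℕ → ℕ) (j : ℕ) : ℕ :=
  Set.ncard {i : ℕ | j < f i}

/-- The number of nonzero parts of `f`. -/
noncomputable def lenFn (f : ℕ → ℕ) : ℕ :=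
  Set.ncard {i : ℕ | f i ≠ 0}

/-- The size `|f|`: the number of boxes of the Young diagram of `f`. -/
noncomputable def sizeFn (f : ℕ → ℕ) : ℕ :=
  Set.ncard {p : ℕ × ℕ | p.2 < f p.1}

/-- The (extended) dominance order on sequences: all partial sums of `f` are at most
those of `g`. -/
def Dom (f g : ℕ → ℕ) : Prop :=
  ∀ k : ℕ, ∑ i ∈ Finset.range k, f i ≤ ∑ i ∈ Finset.range k, g i

/-- The negative part `σ⁻ = (σ'_1, …, σ'_l)` of the `l`-decomposition of `σ`. -/
noncomputable def minusPart (l : ℕ) (f : ℕ → ℕ) : ℕ → ℕ :=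
  fun i => if i < l then conjFn f i else 0

/-- The positive part `σ⁺ = σ - (σ⁻)'` of the `l`-decomposition of `σ`. -/
noncomputable def plusPart (l : ℕ) (f : ℕ → ℕ) : ℕ → ℕ :=
  fun i => f i - conjFn (minusPart l f) i

/-- The concatenation `(σ⁻_1, …, σ⁻_l, σ⁺_1, σ⁺_2, …)`. -/
noncomputable def concatParts (l : ℕ) (f : ℕ → ℕ) : ℕ → ℕ :=
  fun i => if i < l then minusPart l f i else plusPart l f (i - l)

/-- The `l`-twisted dominance order. -/
def TwistedDom (l : ℕ) (f g : ℕ → ℕ) : Prop :=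
  Dom (concatParts l f) (concatParts l g)

lemma finite_gt {f : ℕ → ℕ} (hf : IsPartition f) (j : ℕ) :
    {i : ℕ | j < f i}.Finite := by
  obtain ⟨N, hN⟩ := hf.2
  apply Set.Finite.subset (Set.finite_Iio N)
  intro i hi
  simp only [Set.mem_setOf_eq] at hi
  by_contra h
  simp only [Set.mem_Iio, not_lt] at h
  have := hN i h
  omega

lemma lt_conjFn_iff {f : ℕ → ℕ} (hf : IsPartition f) (j i : ℕ) :
    j < f i ↔ i < conjFn f j := by
  have hfin := finite_gt hf j
  constructor
  · intro h
    have hsub : Set.Iic i ⊆ {k : ℕ | j < f k} := fun k hk =>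
      lt_of_lt_of_le h (hf.1 k i hk)
    have hle := Set.ncard_le_ncard hsub hfin
    have : (Set.Iic i).ncard = i + 1 := by
      rw [← Finset.coe_Iic, Set.ncard_coe_finset, Nat.card_Iic]
    unfold conjFn
    omega
  · intro h
    by_contra hc
    push_neg at hc
    have hsub : {k : ℕ | j < f k} ⊆ Set.Iio i := by
      intro k hk
      simp only [Set.mem_setOf_eq] at hk
      simp only [Set.mem_Iio]
      by_contra hik
      push_neg at hik
      have := hf.1 i k hik
      omega
    have hle := Set.ncard_le_ncard hsub (Set.finite_Iio i)
    have : (Set.Iio i).ncard = i := by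
      rw [← Finset.coe_range, Set.ncard_coe_finset, Finset.card_range]
    unfold conjFn at h
    omega

lemma conj_minus {f : ℕ → ℕ} (hf : IsPartition f) (l i : ℕ) :
    conjFn (minusPart l f) i = min l (f i) := by
  unfold conjFn
  have hset : {j : ℕ | i < minusPart l f j} = Set.Iio (min l (f i)) := by
    ext j
    simp only [Set.mem_setOf_eq, Set.mem_Iio, minusPart, lt_min_iff]
    constructor
    · intro h
      by_cases hj : j < l
      · simp only [hj, if_true] at h
        exact ⟨hj, (lt_conjFn_iff hf j (f := f) i).mpr h⟩
      · simp [hj] at h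
    · rintro ⟨hj, hfi⟩
      simp only [hj, if_true]
      exact (lt_conjFn_iff hf j i).mp hfi
  rw [hset, ← Finset.coe_range, Set.ncard_coe_finset, Finset.card_range]

lemma plus_eq {f : ℕ → ℕ} (hf : IsPartition f) (l i : ℕ) :
    plusPart l f i = f i - l := by
  unfold plusPart
  rw [conj_minus hf]
  omega

lemma sizeFn_eq_sum (g : ℕ → ℕ) (N : ℕ) (hN : ∀ i, N ≤ i → g i = 0) :
    sizeFn g = ∑ i ∈ Finset.range N, g i := by
  unfold sizeFn
  have hset : {p : ℕ × ℕ | p.2 < g p.1} =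
      ↑((Finset.range N).biUnion fun i => {i} ×ˢ Finset.range (g i)) := by
    ext ⟨a, b⟩
    simp only [Set.mem_setOf_eq, Finset.mem_coe, Finset.mem_biUnion,
      Finset.mem_range, Finset.mem_product, Finset.mem_singleton]
    constructor
    · intro h
      refine ⟨a, ?_, rfl, h⟩
      by_contra hc
      push_neg at hc
      have := hN a hc
      omega
    · rintro ⟨i, _, rfl, h⟩
      exact h
  rw [hset, Set.ncard_coe_finset]
  rw [Finset.card_biUnion]
  · apply Finset.sum_congr rfl
    intro i _
    rw [Finset.card_product, Finset.card_singleton, Finset.card_range, one_mul]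
  · intro x _ y _ hxy
    simp only [Finset.disjoint_left]
    rintro ⟨a, b⟩ ha hb
    simp only [Finset.mem_product, Finset.mem_singleton] at ha hb
    exact hxy (ha.1.symm.trans hb.1)

lemma conjFn_eq_card {f : ℕ → ℕ} (hf : IsPartition f) (N : ℕ)
    (hN : ∀ i, N ≤ i → f i = 0) (j : ℕ) :
    conjFn f j = ((Finset.range N).filter (fun i => j < f i)).card := by
  unfold conjFn
  have hset : {i : ℕ | j < f i} = ↑((Finset.range N).filter (fun i => j < f i)) := by
    ext i
    simp only [Set.mem_setOf_eq, Finset.coe_filter, Finset.mem_range, Set.mem_setOf_eq]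
    constructor
    · intro h
      refine ⟨?_, h⟩
      by_contra hc
      push_neg at hc
      have := hN i hc
      omega
    · exact fun h => h.2
  rw [hset, Set.ncard_coe_finset]

lemma minus_sum {f : ℕ → ℕ} (hf : IsPartition f) (l N : ℕ)
    (hN : ∀ i, N ≤ i → f i = 0) :
    ∑ j ∈ Finset.range l, minusPart l f j = ∑ i ∈ Finset.range N, min l (f i) := by
  have h1 : ∑ j ∈ Finset.range l, minusPart l f j
      = ∑ j ∈ Finset.range l, ∑ i ∈ Finset.range N, (if j < f i then 1 else 0) := by
    apply Finset.sum_congr rfl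
    intro j hj
    simp only [Finset.mem_range] at hj
    simp only [minusPart, hj, if_true]
    rw [conjFn_eq_card hf N hN j, Finset.card_filter]
  rw [h1, Finset.sum_comm]
  apply Finset.sum_congr rfl
  intro i _
  rw [← Finset.card_filter]
  have : (Finset.range l).filter (fun j => j < f i) = Finset.range (min l (f i)) := by
    ext j
    simp only [Finset.mem_filter, Finset.mem_range, lt_min_iff]
  rw [this, Finset.card_range]

lemma size_decomp {f : ℕ → ℕ} (hf : IsPartition f) (l N : ℕ)
    (hN : ∀ i, N ≤ i → f i = 0) :
    sizeFn f = ∑ j ∈ Finset.range l, minusPart l f j + sizeFn (plusPart l f) := by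
  have hNp : ∀ i, N ≤ i → plusPart l f i = 0 := by
    intro i hi
    rw [plus_eq hf]
    have := hN i hi
    omega
  rw [sizeFn_eq_sum f N hN, sizeFn_eq_sum (plusPart l f) N hNp, minus_sum hf l N hN,
    ← Finset.sum_add_distrib]
  apply Finset.sum_congr rfl
  intro i _
  rw [plus_eq hf]
  omega

lemma concat_sum_le_l (l : ℕ) (f : ℕ → ℕ) (k : ℕ) (hk : k ≤ l) :
    ∑ i ∈ Finset.range k, concatParts l f i = ∑ i ∈ Finset.range k, minusPart l f i := by
  apply Finset.sum_congr rfl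
  intro i hi
  simp only [Finset.mem_range] at hi
  simp [concatParts, show i < l by omega]

lemma concat_sum_add (l : ℕ) (f : ℕ → ℕ) (k : ℕ) :
    ∑ i ∈ Finset.range (l + k), concatParts l f i
      = ∑ i ∈ Finset.range l, minusPart l f i + ∑ i ∈ Finset.range k, plusPart l f i := by
  induction k with
  | zero => simp [concat_sum_le_l l f l le_rfl]
  | succ k ih =>
    rw [show l + (k+1) = (l+k)+1 from rfl, Finset.sum_range_succ, ih, Finset.sum_range_succ]
    have : concatParts l f (l+k) = plusPart l f k := by
      simp [concatParts, show ¬ (l + k < l) by omega]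
    rw [this]
    ring

lemma minus_sum_stable (l : ℕ) (f : ℕ → ℕ) (k : ℕ) (hk : l ≤ k) :
    ∑ i ∈ Finset.range k, minusPart l f i = ∑ i ∈ Finset.range l, minusPart l f i := by
  symm
  apply Finset.sum_subset (Finset.range_subset_range.2 hk)
  intro i _ hi
  simp only [Finset.mem_range, not_lt] at hi
  simp [minusPart, show ¬ i < l by omega]

lemma shifted_sum (Q : ℕ → ℕ) (d m : ℕ) :
    ∑ i ∈ Finset.range (m+1), (if i = 0 then Q 0 + d else Q i)
      = ∑ i ∈ Finset.range (m+1), Q i + d := by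
  rw [Finset.sum_range_succ' _ m, Finset.sum_range_succ' Q m]
  simp
  omega

/-- Characterisation of the `l`-twisted dominance order: for partitions
`π`, `σ` of the same size, `π ⊴̇ σ` (dominance of the concatenated `l`-decompositions) holds
iff `π⁻ ⊴' σ⁻` (extended dominance), `|π⁺| ≥ |σ⁺|` and `π⁺ ⊴ σ⁺ + (|π⁺| - |σ⁺|)`, where the
quantity `|π⁺| - |σ⁺|` is added to the first part of `σ⁺`. -/
theorem twisted_dominance_characterisation (l : ℕ) (π σ : ℕ → ℕ)
    (hπ : IsPartition π) (hσ : IsPartition σ) (hsize : sizeFn π = sizeFn σ) :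
    TwistedDom l π σ ↔
      (Dom (minusPart l π) (minusPart l σ) ∧
       sizeFn (plusPart l σ) ≤ sizeFn (plusPart l π) ∧
       Dom (plusPart l π)
         (fun i => if i = 0 then
            plusPart l σ 0 + (sizeFn (plusPart l π) - sizeFn (plusPart l σ))
          else plusPart l σ i)) := by
  obtain ⟨Nπ, hNπ⟩ := hπ.2
  obtain ⟨Nσ, hNσ⟩ := hσ.2
  have hA := size_decomp hπ l Nπ hNπ
  have hB := size_decomp hσ l Nσ hNσ
  constructor
  · intro ht
    have hdomAB : Dom (minusPart l π) (minusPart l σ) := by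
      intro k
      rcases le_or_gt k l with hk | hk
      · have := ht k
        rwa [concat_sum_le_l l π k hk, concat_sum_le_l l σ k hk] at this
      · rw [minus_sum_stable l π k hk.le, minus_sum_stable l σ k hk.le]
        have := ht l
        rwa [concat_sum_le_l l π l le_rfl, concat_sum_le_l l σ l le_rfl] at this
    have hab := hdomAB l
    have hpq : sizeFn (plusPart l σ) ≤ sizeFn (plusPart l π) := by omega
    refine ⟨hdomAB, hpq, ?_⟩
    intro k
    cases k with
    | zero => simp
    | succ m =>
      have ht' := ht (l + (m+1))
      rw [concat_sum_add, concat_sum_add] at ht'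
      simp only []
      rw [shifted_sum]
      omega
  · rintro ⟨hdomAB, hpq, hdomP⟩
    intro k
    rcases le_or_gt k l with hk | hk
    · rw [concat_sum_le_l l π k hk, concat_sum_le_l l σ k hk]
      exact hdomAB k
    · obtain ⟨m, rfl⟩ : ∃ m, k = l + (m+1) := ⟨k - l - 1, by omega⟩
      rw [concat_sum_add, concat_sum_add]
      have hab := hdomAB l
      have hP := hdomP (m+1)
      simp only [] at hP
      rw [shifted_sum] at hP
      omega
end

section
/- Fix ℓ⁻ ∈ ℕ. Let α, γ, δ be partitions. (i) If the Young diagram of α contains the rectangle with ℓ(δ) rows and ℓ⁻ columns (i.e. α_{ℓ(δ)} ≥ ℓ⁻, or ℓ(δ)=0, or ℓ⁻=0), then the ℓ⁻-decomposition of α + δ satisfies (α+δ)⁻ = α⁻ and (α+δ)⁺ = α⁺ + δ. (ii) If ℓ(γ) ≤ ℓ⁻ then the ℓ⁻-decomposition of α ⊔ γ' satisfies (α ⊔ γ')⁻ = α⁻ + γ and (α ⊔ γ')⁺ = α⁺. -/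
/-- `f` is `(lm, lp)`-large: `lm = 0`, or `lp = 0`, or the box `(lp, lm)` lies in the
Young diagram of `f`, i.e. `f_{lp} ≥ lm`. -/
def IsLarge (lm lp : ℕ) (f : ℕ → ℕ) : Prop :=
  lm = 0 ∨ lp = 0 ∨ lm ≤ f (lp - 1)

/-!
For a partition `f` we have `plusPart l f i = f i - l`, so everything reduces to columns. In (i) every row carrying a box of `δ` already has at least `l` boxes of `α`,
so the first `l` columns of `α + δ` are those of `α` and `δ` only lengthens rows beyond column
`l`. In (ii) counting the parts of `α ⊔ γ'` that exceed `i` gives `(α ⊔ γ')' = α' + γ`; since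
`γ` vanishes from index `l` on, the two partitions have the same columns from `l` on and hence
the same rows after removing their first `l` boxes.
-/

open Set

lemma lenFn_eq_conjFn_zero (f : ℕ → ℕ) : lenFn f = conjFn f 0 := by
  simp only [lenFn, conjFn, Nat.pos_iff_ne_zero]

lemma conjFn_eq_sum_ncard_fiber {f : ℕ → ℕ} (hf : {k | f k ≠ 0}.Finite) {M : ℕ}
    (hM : ∀ k, f k ≤ M) (i : ℕ) :
    conjFn f i = ∑ m ∈ Finset.Ioc i M, {k | f k = m}.ncard := by
  classical
  set s := hf.toFinset
  have hfiber : ∀ m ∈ Finset.Ioc i M, {k | f k = m} = ↑(s.filter (f · = m)) := by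
    intro m hm
    ext k
    simp only [Finset.mem_Ioc] at hm
    simp only [s, mem_ofPred_eq, Finset.coe_filter, Finite.mem_toFinset]
    omega
  have hconj : {k | i < f k} = ↑(s.filter (f · ∈ Finset.Ioc i M)) := by
    ext k
    simp only [s, mem_ofPred_eq, Finset.coe_filter, Finite.mem_toFinset, Finset.mem_Ioc]
    have := hM k
    omega
  rw [conjFn, hconj, ncard_coe_finset, ← Finset.sum_card_fiberwise_eq_card_filter]
  exact Finset.sum_congr rfl fun m hm => by rw [hfiber m hm, ncard_coe_finset]

lemma conjFn_add_of_lt {α δ : ℕ → ℕ} {l : ℕ} (h : ∀ k, δ k ≠ 0 → l ≤ α k) {i : ℕ}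
    (hi : i < l) : conjFn (fun k => α k + δ k) i = conjFn α i := by
  unfold conjFn
  congr 1
  ext k
  by_cases hk : δ k = 0
  · simp [hk]
  · have := h k hk
    simp only [mem_ofPred_eq]
    omega

namespace IsPartition

variable {f g : ℕ → ℕ}

lemma support_finite (hf : IsPartition f) : {i | f i ≠ 0}.Finite := by
  obtain ⟨N, hN⟩ := hf.2
  refine (finite_Iio N).subset fun i hi => ?_
  by_contra h
  exact hi (hN i (not_lt.mp h))

lemma le_apply_zero (hf : IsPartition f) (i : ℕ) : f i ≤ f 0 :=
  hf.1 0 i (Nat.zero_le i)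

lemma add (hf : IsPartition f) (hg : IsPartition g) : IsPartition (fun i => f i + g i) := by
  obtain ⟨N, hN⟩ := hf.2
  obtain ⟨N', hN'⟩ := hg.2
  refine ⟨fun i j hij => Nat.add_le_add (hf.1 i j hij) (hg.1 i j hij), max N N', fun i hi => ?_⟩
  simp only [hN i (le_of_max_le_left hi), hN' i (le_of_max_le_right hi)]

lemma finite_setOf_lt (hf : IsPartition f) (k : ℕ) : {j | k < f j}.Finite :=
  hf.support_finite.subset fun _ hj => Nat.ne_zero_of_lt hj

lemma lt_conjFn_iff (hf : IsPartition f) (i k : ℕ) : i < conjFn f k ↔ k < f i := by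
  constructor
  · intro hi
    by_contra h
    have hsub : {j | k < f j} ⊆ Iio i := fun j hj => by
      by_contra hji
      exact h (lt_of_lt_of_le hj (hf.1 _ _ (not_lt.mp hji)))
    have := ncard_le_ncard hsub (finite_Iio i)
    rw [ncard_Iio_nat] at this
    exact absurd hi (not_lt.mpr this)
  · intro h
    have hsub : Iic i ⊆ {j | k < f j} := fun j hj => lt_of_lt_of_le h (hf.1 _ _ hj)
    simpa [conjFn] using ncard_le_ncard hsub (hf.finite_setOf_lt k)

lemma ne_zero_iff_lt_lenFn (hf : IsPartition f) {i : ℕ} : f i ≠ 0 ↔ i < lenFn f := by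
  rw [lenFn_eq_conjFn_zero, hf.lt_conjFn_iff, Nat.pos_iff_ne_zero]

lemma conj (hf : IsPartition f) : IsPartition (conjFn f) := by
  refine ⟨fun i j hij => ?_, f 0, fun i hi => ?_⟩
  · exact ncard_le_ncard (fun k hk => lt_of_le_of_lt hij hk) (hf.finite_setOf_lt i)
  · by_contra h
    exact absurd ((hf.lt_conjFn_iff 0 i).1 (Nat.pos_of_ne_zero h)) (not_lt.mpr hi)

lemma conjFn_conjFn (hf : IsPartition f) (i : ℕ) : conjFn (conjFn f) i = f i := by
  have : {k | i < conjFn f k} = Iio (f i) := by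
    ext k
    simp [hf.lt_conjFn_iff]
  rw [conjFn, this, ncard_Iio_nat]

lemma plusPart_eq (hf : IsPartition f) (l i : ℕ) : plusPart l f i = f i - l := by
  have hset : {k | i < minusPart l f k} = Iio (min l (f i)) := by
    ext k
    by_cases hk : k < l
    · simp [minusPart, hk, hf.lt_conjFn_iff]
    · simp [minusPart, hk]
  rw [plusPart, conjFn, hset, ncard_Iio_nat]
  omega

lemma sub_eq_sub_of_conjFn_eq (hf : IsPartition f) (hg : IsPartition g) {l : ℕ}
    (h : ∀ k, l ≤ k → conjFn f k = conjFn g k) (i : ℕ) : f i - l = g i - l :=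
  eq_of_forall_lt_iff fun m => by
    rw [Nat.lt_sub_iff_add_lt, Nat.lt_sub_iff_add_lt, ← hf.lt_conjFn_iff, ← hg.lt_conjFn_iff,
      h _ (Nat.le_add_left l m)]

end IsPartition

lemma conjFn_eq_add_of_ncard_fiber_eq_add {f g h : ℕ → ℕ} (hf : IsPartition f)
    (hg : IsPartition g) (hh : IsPartition h)
    (hmult : ∀ m, 0 < m → {i | h i = m}.ncard = {i | f i = m}.ncard + {i | g i = m}.ncard)
    (i : ℕ) : conjFn h i = conjFn f i + conjFn g i := by
  set M := max (h 0) (max (f 0) (g 0))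
  have bound : ∀ {u : ℕ → ℕ}, IsPartition u → u 0 ≤ M → ∀ k, u k ≤ M :=
    fun hu hu0 k => (hu.le_apply_zero k).trans hu0
  rw [conjFn_eq_sum_ncard_fiber hh.support_finite (bound hh (by omega)),
    conjFn_eq_sum_ncard_fiber hf.support_finite (bound hf (by omega)),
    conjFn_eq_sum_ncard_fiber hg.support_finite (bound hg (by omega)),
    ← Finset.sum_add_distrib]
  exact Finset.sum_congr rfl fun m hm => hmult m (by simp only [Finset.mem_Ioc] at hm; omega)

lemma IsLarge.le_of_ne_zero {l : ℕ} {α δ : ℕ → ℕ} (h : IsLarge l (lenFn δ) α)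
    (hα : IsPartition α) (hδ : IsPartition δ) {k : ℕ} (hk : δ k ≠ 0) : l ≤ α k := by
  rw [hδ.ne_zero_iff_lt_lenFn] at hk
  rcases h with h | h | h
  · omega
  · omega
  · exact h.trans (hα.1 _ _ (by omega))

/-- (i) If `α` is `(l, ℓ(δ))`-large then `(α+δ)⁻ = α⁻` and
`(α+δ)⁺ = α⁺ + δ`.  (ii) If `ℓ(γ) ≤ l` then, for `j = α ⊔ γ'` (the join, characterised by
its multiset of nonzero parts), `j⁻ = α⁻ + γ` and `j⁺ = α⁺`. -/
theorem add_and_join_decomposition (l : ℕ) (α γ δ : ℕ → ℕ)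
    (hα : IsPartition α) (hγ : IsPartition γ) (hδ : IsPartition δ) :
    (IsLarge l (lenFn δ) α →
      (∀ i, minusPart l (fun i' => α i' + δ i') i = minusPart l α i) ∧
      (∀ i, plusPart l (fun i' => α i' + δ i') i = plusPart l α i + δ i)) ∧
    (lenFn γ ≤ l →
      ∀ j : ℕ → ℕ, IsPartition j →
        (∀ m : ℕ, 0 < m →
          Set.ncard {i : ℕ | j i = m} =
            Set.ncard {i : ℕ | α i = m} + Set.ncard {i : ℕ | conjFn γ i = m}) →
        (∀ i, minusPart l j i = minusPart l α i + γ i) ∧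
        (∀ i, plusPart l j i = plusPart l α i)) := by
  refine ⟨fun hlarge => ?_, fun hγl j hj hmult => ?_⟩
  · have hle : ∀ k, δ k ≠ 0 → l ≤ α k := fun _ => hlarge.le_of_ne_zero hα hδ
    refine ⟨fun i => ?_, fun i => ?_⟩
    · unfold minusPart
      split_ifs with hi
      exacts [conjFn_add_of_lt hle hi, rfl]
    · rw [(hα.add hδ).plusPart_eq, hα.plusPart_eq]
      by_cases hi : δ i = 0
      · simp [hi]
      · have := hle i hi
        omega
  · have hconj : ∀ k, conjFn j k = conjFn α k + γ k := fun k => by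
      rw [conjFn_eq_add_of_ncard_fiber_eq_add hα hγ.conj hj hmult, hγ.conjFn_conjFn]
    have hγ0 : ∀ k, l ≤ k → γ k = 0 := fun k hk => by
      by_contra h
      have := hγ.ne_zero_iff_lt_lenFn.1 h
      omega
    refine ⟨fun i => ?_, fun i => ?_⟩
    · unfold minusPart
      split_ifs with hi
      exacts [hconj i, by rw [hγ0 i (not_lt.mp hi)]]
    · rw [hj.plusPart_eq, hα.plusPart_eq]
      exact hj.sub_eq_sub_of_conjFn_eq hα (fun k hk => by rw [hconj, hγ0 k hk, add_zero]) i
end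

section
/- Fix ℓ⁻ ∈ ℕ and ℓ⁺ ∈ ℕ. Let ω be a partition that is (ℓ⁻+1, ℓ⁺)-large. If π ⊴̇ ω in the ℓ⁻-twisted dominance order then π is (ℓ⁻+1, ℓ⁺)-large. -/
/- ### Auxiliary lemmas -/

lemma aux_lt_conjFn_iff (f : ℕ → ℕ) (hf : IsPartition f) (i j : ℕ) :
    i < conjFn f j ↔ j < f i := by
  obtain ⟨hmono, N, hN⟩ := hf
  constructor
  · intro h
    by_contra hc
    push_neg at hc
    have hsub : {k : ℕ | j < f k} ⊆ ↑(Finset.range i) := by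
      intro k hk
      simp only [Finset.coe_range, Set.mem_Iio]
      by_contra hki
      push_neg at hki
      exact absurd (lt_of_lt_of_le hk (le_trans (hmono i k hki) hc)) (lt_irrefl j)
    have := Set.ncard_le_ncard hsub (Finset.finite_toSet _)
    rw [Set.ncard_coe_finset, Finset.card_range] at this
    exact absurd (lt_of_lt_of_le h this) (lt_irrefl i)
  · intro h
    have hsub : ↑(Finset.range (i + 1)) ⊆ {k : ℕ | j < f k} := by
      intro k hk
      simp only [Finset.coe_range, Set.mem_Iio] at hk
      exact lt_of_lt_of_le h (hmono k i (by omega))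
    have hfin : {k : ℕ | j < f k}.Finite := by
      apply (Finset.finite_toSet (Finset.range N)).subset
      intro k hk
      simp only [Finset.coe_range, Set.mem_Iio]
      by_contra hkN
      push_neg at hkN
      simp only [Set.mem_setOf_eq, hN k hkN] at hk
      omega
    have := Set.ncard_le_ncard hsub hfin
    rw [Set.ncard_coe_finset, Finset.card_range] at this
    unfold conjFn
    omega

lemma aux_plusPart_eq (l : ℕ) (f : ℕ → ℕ) (hf : IsPartition f) (i : ℕ) :
    plusPart l f i = f i - l := by
  have hset : {j : ℕ | i < minusPart l f j} = ↑(Finset.range (min l (f i))) := by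
    ext j
    simp only [Set.mem_setOf_eq, minusPart, Finset.coe_range, Set.mem_Iio, lt_min_iff]
    split_ifs with h
    · rw [aux_lt_conjFn_iff f hf]
      omega
    · omega
  have hconj : conjFn (minusPart l f) i = min l (f i) := by
    rw [conjFn, hset, Set.ncard_coe_finset, Finset.card_range]
  rw [plusPart, hconj]
  omega

lemma aux_conjFn_eq_card (f : ℕ → ℕ) (N : ℕ) (hN : ∀ i, N ≤ i → f i = 0) (j : ℕ) :
    conjFn f j = ((Finset.range N).filter (fun i => j < f i)).card := by
  rw [conjFn, ← Set.ncard_coe_finset]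
  congr 1
  ext i
  simp only [Set.mem_setOf_eq, Finset.coe_filter, Finset.mem_range]
  constructor
  · intro h
    refine ⟨?_, h⟩
    by_contra hc
    push_neg at hc
    rw [hN i hc] at h
    omega
  · exact fun h => h.2

lemma aux_sizeFn_eq_sum (f : ℕ → ℕ) (N : ℕ) (hN : ∀ i, N ≤ i → f i = 0) :
    sizeFn f = ∑ i ∈ Finset.range N, f i := by
  classical
  have hset : {p : ℕ × ℕ | p.2 < f p.1} =
      ↑((Finset.range N).biUnion (fun i => {i} ×ˢ Finset.range (f i))) := by
    ext ⟨a, b⟩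
    simp only [Set.mem_setOf_eq, Finset.coe_biUnion, Finset.coe_range, Set.mem_iUnion,
      Set.mem_Iio, Finset.coe_product, Finset.coe_singleton, Set.mem_prod,
      Set.mem_singleton_iff]
    constructor
    · intro h
      refine ⟨a, ?_, rfl, h⟩
      by_contra hc
      push_neg at hc
      rw [hN a hc] at h
      omega
    · rintro ⟨i, _, rfl, h⟩
      exact h
  rw [sizeFn, hset, Set.ncard_coe_finset, Finset.card_biUnion]
  · apply Finset.sum_congr rfl
    intro i _
    rw [Finset.card_product, Finset.card_singleton, Finset.card_range, one_mul]
  · intro x _ y _ hxy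
    simp only [Finset.disjoint_left]
    rintro ⟨a, b⟩ h1 h2
    simp only [Finset.mem_product, Finset.mem_singleton] at h1 h2
    exact hxy (h1.1 ▸ h2.1 ▸ rfl)

lemma aux_sum_conj (f : ℕ → ℕ) (N l : ℕ) (hN : ∀ i, N ≤ i → f i = 0) :
    ∑ j ∈ Finset.range l, conjFn f j = ∑ i ∈ Finset.range N, min (f i) l := by
  classical
  have h1 : ∀ j, conjFn f j = ∑ i ∈ Finset.range N, (if j < f i then 1 else 0) := by
    intro j
    rw [aux_conjFn_eq_card f N hN j, Finset.card_filter]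
  simp only [h1]
  rw [Finset.sum_comm]
  apply Finset.sum_congr rfl
  intro i _
  have : ((Finset.range l).filter (fun j => j < f i)) = Finset.range (min (f i) l) := by
    ext j
    simp only [Finset.mem_filter, Finset.mem_range, lt_min_iff]
    omega
  rw [← Finset.card_filter, this, Finset.card_range]

lemma aux_sum_range_split (f : ℕ → ℕ) (m n : ℕ) :
    ∑ i ∈ Finset.range (m + n), f i
      = ∑ i ∈ Finset.range m, f i + ∑ i ∈ Finset.range n, f (m + i) := by
  induction n with
  | zero => simp
  | succ n ih =>
    rw [Nat.add_succ, Finset.sum_range_succ, ih, Finset.sum_range_succ]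
    omega

lemma aux_concat_sum (l : ℕ) (f : ℕ → ℕ) (hf : IsPartition f) (N : ℕ)
    (hN : ∀ i, N ≤ i → f i = 0) :
    ∑ i ∈ Finset.range (l + N), concatParts l f i = sizeFn f := by
  rw [aux_sum_range_split]
  have h1 : ∑ i ∈ Finset.range l, concatParts l f i = ∑ i ∈ Finset.range N, min (f i) l := by
    rw [← aux_sum_conj f N l hN]
    apply Finset.sum_congr rfl
    intro i hi
    simp only [Finset.mem_range] at hi
    simp [concatParts, minusPart, hi]
  have h2 : ∑ i ∈ Finset.range N, concatParts l f (l + i)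
      = ∑ i ∈ Finset.range N, (f i - l) := by
    apply Finset.sum_congr rfl
    intro i _
    have : ¬ (l + i < l) := by omega
    simp only [concatParts, this, if_false, Nat.add_sub_cancel_left]
    exact aux_plusPart_eq l f hf i
  rw [h1, h2, aux_sizeFn_eq_sum f N hN, ← Finset.sum_add_distrib]
  apply Finset.sum_congr rfl
  intro i _
  omega

/-- If `ω` is an `(l+1, lp)`-large partition and `π ⊴̇ ω` in the
`l`-twisted dominance order then `π` is `(l+1, lp)`-large. -/
theorem twisted_downset_large (l lp : ℕ) (ω π : ℕ → ℕ)
    (hω : IsPartition ω) (hπ : IsPartition π) (hsize : sizeFn π = sizeFn ω)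
    (hlarge : IsLarge (l + 1) lp ω) (hdom : TwistedDom l π ω) :
    IsLarge (l + 1) lp π := by
  rcases Nat.eq_zero_or_pos lp with hlp | hlp
  · exact Or.inr (Or.inl hlp)
  have hωl : l + 1 ≤ ω (lp - 1) := by
    rcases hlarge with h | h | h
    · omega
    · omega
    · exact h
  refine Or.inr (Or.inr ?_)
  by_contra hc
  push_neg at hc
  obtain ⟨hπmono, Nπ, hNπ⟩ := hπ
  obtain ⟨hωmono, Nω, hNω⟩ := hω
  set N : ℕ := max Nπ (max Nω lp) with hNdef
  have hNπ' : ∀ i, N ≤ i → π i = 0 := fun i hi => hNπ i (by omega)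
  have hNω' : ∀ i, N ≤ i → ω i = 0 := fun i hi => hNω i (by omega)
  have hsumπ : ∑ i ∈ Finset.range (l + N), concatParts l π i = sizeFn π :=
    aux_concat_sum l π ⟨hπmono, Nπ, hNπ⟩ N hNπ'
  have hsumω : ∑ i ∈ Finset.range (l + N), concatParts l ω i = sizeFn ω :=
    aux_concat_sum l ω ⟨hωmono, Nω, hNω⟩ N hNω'
  -- π's concatenation vanishes from index l + (lp - 1) on
  have hπzero : ∀ i, l + (lp - 1) ≤ i → concatParts l π i = 0 := by
    intro i hi
    have hil : ¬ (i < l) := by omega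
    simp only [concatParts, hil, if_false]
    rw [aux_plusPart_eq l π ⟨hπmono, Nπ, hNπ⟩]
    have : π (i - l) ≤ π (lp - 1) := hπmono (lp - 1) (i - l) (by omega)
    omega
  have hπtrunc : ∑ i ∈ Finset.range (l + N), concatParts l π i
      = ∑ i ∈ Finset.range (l + (lp - 1)), concatParts l π i := by
    symm
    apply Finset.sum_subset
    · apply Finset.range_subset_range.2
      omega
    · intro i _ hi
      simp only [Finset.mem_range] at hi
      push_neg at hi
      exact hπzero i hi
  -- ω's concatenation at index l + (lp - 1) is positive
  have hωpos : 1 ≤ concatParts l ω (l + (lp - 1)) := by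
    have hil : ¬ (l + (lp - 1) < l) := by omega
    simp only [concatParts, hil, if_false, Nat.add_sub_cancel_left]
    rw [aux_plusPart_eq l ω ⟨hωmono, Nω, hNω⟩]
    omega
  have hωgrow : ∑ i ∈ Finset.range (l + (lp - 1)), concatParts l ω i + 1
      ≤ ∑ i ∈ Finset.range (l + N), concatParts l ω i := by
    have hsucc : ∑ i ∈ Finset.range (l + (lp - 1) + 1), concatParts l ω i
        = ∑ i ∈ Finset.range (l + (lp - 1)), concatParts l ω i
          + concatParts l ω (l + (lp - 1)) := Finset.sum_range_succ _ _
    have hsub : ∑ i ∈ Finset.range (l + (lp - 1) + 1), concatParts l ω i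
        ≤ ∑ i ∈ Finset.range (l + N), concatParts l ω i := by
      apply Finset.sum_le_sum_of_subset
      apply Finset.range_subset_range.2
      omega
    omega
  have hd := hdom (l + (lp - 1))
  omega
end

section
/- Let n, m ∈ ℕ and 1 ≤ ℓ ≤ mn/2. The number of partitions of ℓ fitting inside an m × n box (at most n parts, each at most m) minus the number of partitions of ℓ−1 fitting inside an m × n box equals the multiplicity ⟨s_{(n)} ∘ s_{(m)}, s_{(mn−ℓ,ℓ)}⟩, and this difference is always nonnegative (Cayley–Sylvester). Equivalently, there is a bijection between plethystic semistandard tableaux of outer shape (n), inner shape (m), and weight (mn−ℓ, ℓ) with entries in {1,2}, and partitions of ℓ contained in an m × n box. -/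
/-!
A weakly increasing row with entries in `{1, 2}` is determined by its number of `2`s, and the
colexicographic order on such rows is the order of these numbers; reading off the number of `2`s
of each row therefore turns a plethystic tableau into a box partition.

For the inequality, a box partition `p` of `t` corresponds to the monomial `x_{p_1} ⋯ x_{p_n}` in
`ℚ[x_0, …, x_m]`, of degree `n` and weight `t` (the weight of `x_i` being `i`), so these count a
weight basis of `Sym^n (Sym^m ℚ²)`. The derivations `e = ∑ i x_{i-1} ∂_i`,
`f = ∑ (m - i) x_{i+1} ∂_i` and `h = ⁅e, f⁆` form an `sl₂`-triple; `h` acts on weight `t` by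
`mn - 2t`, `e` lowers and `f` raises the weight by one. If `2t < mn`, then `f` is injective on
weight `t`: a nonzero vector killed by `f` is primitive for the opposite triple `(-h, f, e)`, with
eigenvalue `-(mn - 2t)` not a natural number, so no power of `e` kills it, whereas `e` cannot
lower the weight below `0`.
-/

/-- The colexicographic order on rows (read right to left): `s ≤ t` iff `s = t` or at the
rightmost position where they differ `s` has the smaller entry. -/
def ColexLeRow (m : ℕ) (s t : Fin m → ℕ) : Prop :=
  s = t ∨ ∃ j : Fin m, s j < t j ∧ ∀ k : Fin m, j < k → s k = t k

open Finset MvPolynomial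

namespace Finsupp

@[elab_as_elim]
theorem induction_on_single_one {σ : Type*} {motive : (σ →₀ ℕ) → Prop} (s : σ →₀ ℕ)
    (zero : motive 0) (single_one : ∀ i, motive (single i 1))
    (add : ∀ f g, motive f → motive g → motive (f + g)) : motive s :=
  s.induction_linear zero add fun i k => by
    induction k with
    | zero => simpa using zero
    | succ k ih => simpa [single_add] using add _ _ ih (single_one i)

end Finsupp

theorem Antitone.eq_of_coe_ofFn_eq {α : Type*} [PartialOrder α] {n : ℕ} {p q : Fin n → α}
    (hp : Antitone p) (hq : Antitone q) (h : (List.ofFn p : Multiset α) = List.ofFn q) : p = q :=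
  List.ofFn_injective <|
    (Multiset.coe_eq_coe.mp h).eq_of_sortedGE hp.sortedGE_ofFn hq.sortedGE_ofFn

theorem Multiset.exists_antitone_coe_ofFn_eq {α : Type*} [LinearOrder α] {n : ℕ} {S : Multiset α}
    (hS : card S = n) :
    ∃ p : Fin n → α, Antitone p ∧ (List.ofFn p : Multiset α) = S := by
  have hl : (S.sort (· ≥ ·)).length = n := by simpa using hS
  subst hl
  refine ⟨(S.sort (· ≥ ·)).get, ?_, ?_⟩
  · rw [← List.sortedGE_ofFn_iff, List.ofFn_get]
    exact (S.pairwise_sort _).sortedGE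
  · rw [List.ofFn_get, Multiset.sort_eq]

theorem Finsupp.weight_toFinsupp {σ M : Type*} [DecidableEq σ] [AddCommMonoid M] (w : σ → M)
    (S : Multiset σ) : weight w (Multiset.toFinsupp S) = (S.map w).sum := by
  induction S using Multiset.induction_on with
  | empty => simp
  | cons a S ih =>
    rw [← Multiset.singleton_add, Multiset.toFinsupp_add, map_add, ih,
      Multiset.toFinsupp_singleton, weight_single, one_smul, Multiset.map_add, Multiset.sum_add,
      Multiset.map_singleton, Multiset.sum_singleton]

namespace MvPolynomial

variable {σ M R : Type*} [AddCommMonoid M] [CommSemiring R] (w : σ → M) (a : M)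

noncomputable def weightedHomogeneousSubmoduleEquiv :
    weightedHomogeneousSubmodule R w a ≃ₗ[R] ({d : σ →₀ ℕ | Finsupp.weight w d = a} →₀ R) :=
  (LinearEquiv.ofEq _ _ (weightedHomogeneousSubmodule_eq_finsupp_supported R w a)).trans
    (AddMonoidAlgebra.supportedEquivFinsupp _)

variable [Finite {d : σ →₀ ℕ | Finsupp.weight w d = a}]

instance : Module.Finite R (weightedHomogeneousSubmodule R w a) :=
  Module.Finite.equiv (weightedHomogeneousSubmoduleEquiv w a).symm

theorem finrank_weightedHomogeneousSubmodule [StrongRankCondition R] :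
    Module.finrank R (weightedHomogeneousSubmodule R w a) =
      Nat.card {d : σ →₀ ℕ | Finsupp.weight w d = a} := by
  have := Fintype.ofFinite {d : σ →₀ ℕ | Finsupp.weight w d = a}
  rw [(weightedHomogeneousSubmoduleEquiv w a).finrank_eq, Module.finrank_finsupp_self,
    Nat.card_eq_fintype_card]

end MvPolynomial

namespace Derivation

variable {σ R M : Type*} [CommSemiring R] [AddCommMonoid M] {w : σ → M}
  (D : Derivation R (MvPolynomial σ R) (MvPolynomial σ R))

theorem mem_weightedHomogeneousSubmodule_add {δ : M}
    (hD : ∀ i, D (X i) ∈ weightedHomogeneousSubmodule R w (w i + δ)) {a : M}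
    {φ : MvPolynomial σ R} (hφ : φ ∈ weightedHomogeneousSubmodule R w a) :
    D φ ∈ weightedHomogeneousSubmodule R w (a + δ) := by
  have hmonomial (s : σ →₀ ℕ) :
      D (monomial s 1) ∈ weightedHomogeneousSubmodule R w (Finsupp.weight w s + δ) := by
    induction s using Finsupp.induction_on_single_one with
    | zero => simp [← one_def]
    | single_one i => rw [Finsupp.weight_single, one_smul]; exact hD i
    | add f g hf hg =>
      rw [← one_mul (1 : R), ← monomial_mul, leibniz, map_add]
      refine add_mem ?_ ?_
      · rw [add_assoc, smul_eq_mul]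
        exact (isWeightedHomogeneous_monomial w f 1 rfl).mul hg
      · rw [add_comm (Finsupp.weight w f), add_assoc, smul_eq_mul]
        exact (isWeightedHomogeneous_monomial w g 1 rfl).mul hf
  rw [mem_weightedHomogeneousSubmodule] at hφ
  induction hφ using IsWeightedHomogeneous.induction_on with
  | zero => simp
  | add p q _ _ hp hq => simpa using add_mem hp hq
  | monomial s r hs =>
    rw [← mul_one r, ← smul_eq_mul, ← smul_monomial, map_smul, ← hs]
    exact Submodule.smul_mem _ r (hmonomial s)

theorem eq_smul_of_mem_weightedHomogeneousSubmodule (ℓ : M →+ R)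
    (hD : ∀ i, D (X i) = ℓ (w i) • X i) {a : M} {φ : MvPolynomial σ R}
    (hφ : φ ∈ weightedHomogeneousSubmodule R w a) : D φ = ℓ a • φ := by
  have hmonomial (s : σ →₀ ℕ) :
      D (monomial s 1) = ℓ (Finsupp.weight w s) • monomial s 1 := by
    induction s using Finsupp.induction_on_single_one with
    | zero => simp [← one_def]
    | single_one i => rw [Finsupp.weight_single, one_smul]; exact hD i
    | add f g hf hg =>
      rw [← one_mul (1 : R), ← monomial_mul, leibniz, hf, hg, map_add, map_add, add_smul,
        smul_eq_mul, smul_eq_mul, mul_smul_comm, mul_smul_comm, mul_comm (monomial g 1),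
        add_comm]
  rw [mem_weightedHomogeneousSubmodule] at hφ
  induction hφ using IsWeightedHomogeneous.induction_on with
  | zero => simp
  | add p q _ _ hp hq => rw [map_add, hp, hq, smul_add]
  | monomial s r hs =>
    rw [← mul_one r, ← smul_eq_mul, ← smul_monomial, map_smul, ← hs, hmonomial, smul_comm]

end Derivation

namespace IsSl2Triple.HasPrimitiveVectorWith

open LieModule

variable {R L M : Type*} [CommRing R] [LieRing L] [LieAlgebra R L] [AddCommGroup M] [Module R M]
  [LieRingModule L M] [LieModule R L M] [IsDomain R] [CharZero R] [Module.IsTorsionFree R M]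
  {h e f : L} {t : IsSl2Triple h e f} {m : M} {μ : R}

lemma pow_toEnd_f_ne_zero_of_forall_ne_nat (P : HasPrimitiveVectorWith t m μ)
    (hμ : ∀ n : ℕ, μ ≠ n) (i : ℕ) : (toEnd R L M f ^ i) m ≠ 0 := by
  induction i with
  | zero => simpa using P.ne_zero
  | succ i ih =>
    intro hi
    have := P.lie_e_pow_succ_toEnd_f i
    rw [hi, lie_zero, eq_comm, smul_eq_zero, mul_eq_zero] at this
    rcases this with (h | h) | h
    · exact Nat.cast_add_one_ne_zero i h
    · exact hμ i (sub_eq_zero.mp h)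
    · exact ih h

end IsSl2Triple.HasPrimitiveVectorWith

namespace CayleySylvester

abbrev PlethysticTableau (m n L : ℕ) : Type :=
  {T : Fin n → Fin m → ℕ //
    (∀ i j, T i j = 1 ∨ T i j = 2) ∧
    (∀ i, Monotone (T i)) ∧
    (∀ i₁ i₂ : Fin n, i₁ ≤ i₂ → ColexLeRow m (T i₁) (T i₂)) ∧
    (∑ i, (Finset.univ.filter fun j => T i j = 2).card) = L}

abbrev BoxPartition (m n t : ℕ) : Type :=
  {p : Fin n → ℕ // Antitone p ∧ (∀ i, p i ≤ m) ∧ ∑ i, p i = t}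

section Rows

variable {m : ℕ}

def twoCount (s : Fin m → ℕ) : ℕ := #{j | s j = 2}

def twoRow (m c : ℕ) : Fin m → ℕ := fun j => if (j : ℕ) < m - c then 1 else 2

lemma twoCount_add_card_eq_one {s : Fin m → ℕ} (hs : ∀ j, s j = 1 ∨ s j = 2) :
    twoCount s + #{j | s j = 1} = m := by
  have : #{j | s j = 2} = #{j | ¬ s j = 1} :=
    congrArg card (filter_congr fun j _ => by rcases hs j with h | h <;> simp [h])
  rw [twoCount, this, add_comm, card_filter_add_card_filter_not, card_univ, Fintype.card_fin]

lemma twoCount_le (s : Fin m → ℕ) : twoCount s ≤ m :=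
  (card_filter_le _ _).trans_eq (by simp)

lemma twoCount_twoRow {c : ℕ} (hc : c ≤ m) : twoCount (twoRow m c) = c := by
  have h12 : ∀ j, twoRow m c j = 1 ∨ twoRow m c j = 2 := fun j => by
    unfold twoRow; split_ifs <;> simp
  have hone : #{j | twoRow m c j = 1} = m - c := by
    rw [← min_eq_right (Nat.sub_le m c), ← Fin.card_filter_val_lt]
    exact congrArg card (filter_congr fun j _ => by unfold twoRow; split_ifs <;> simp [*])
  have := twoCount_add_card_eq_one h12
  omega

lemma eq_twoRow {s : Fin m → ℕ} (hs : ∀ j, s j = 1 ∨ s j = 2) (hmono : Monotone s) :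
    s = twoRow m (twoCount s) := by
  have hdown : ∀ i j, j ≤ i → s i = 1 → s j = 1 := fun i j hji hi => by
    have := hmono hji
    rcases hs j with h | h <;> omega
  have hsum := twoCount_add_card_eq_one hs
  funext j
  have key := Fin.lt_card_filter_univ_iff_apply_of_imp (j := j) _ hdown
  unfold twoRow
  split_ifs with hj
  · exact key.mp (by omega)
  · rcases hs j with h | h
    · exact absurd (key.mpr h) (by omega)
    · exact h

lemma colexLeRow_twoRow_iff {a b : ℕ} (ha : a ≤ m) (hb : b ≤ m) :
    ColexLeRow m (twoRow m a) (twoRow m b) ↔ a ≤ b := by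
  constructor
  · rintro (h | ⟨j, hj, -⟩)
    · have := congrArg twoCount h
      rw [twoCount_twoRow ha, twoCount_twoRow hb] at this
      omega
    · unfold twoRow at hj
      split_ifs at hj <;> omega
  · intro hab
    rcases hab.eq_or_lt with rfl | hlt
    · exact Or.inl rfl
    · refine Or.inr ⟨⟨m - a - 1, by omega⟩, ?_, fun k hk => ?_⟩
      · simp only [twoRow]
        split_ifs <;> omega
      · rw [Fin.lt_def] at hk
        simp only [twoRow] at hk ⊢
        split_ifs <;> omega

lemma monotone_twoRow (c : ℕ) : Monotone (twoRow m c) := fun i j hij => by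
  rw [Fin.le_def] at hij
  unfold twoRow
  split_ifs <;> omega

end Rows

def plethysticTableauEquiv (m n L : ℕ) : PlethysticTableau m n L ≃ BoxPartition m n L where
  toFun T := ⟨fun i => twoCount (T.1 i.rev), fun i i' hii' => by
      obtain ⟨T, h12, hmono, hcolex, -⟩ := T
      have h := hcolex _ _ (Fin.rev_le_rev.mpr hii')
      rwa [eq_twoRow (h12 i'.rev) (hmono _), eq_twoRow (h12 i.rev) (hmono _),
        colexLeRow_twoRow_iff (twoCount_le _) (twoCount_le _)] at h,
    fun i => twoCount_le _,
    (Equiv.sum_comp Fin.revPerm fun i => twoCount (T.1 i)).trans T.2.2.2.2⟩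
  invFun p := ⟨fun i => twoRow m (p.1 i.rev),
    fun i j => by dsimp only [twoRow]; split_ifs <;> simp,
    fun i => monotone_twoRow _,
    fun i₁ i₂ h => (colexLeRow_twoRow_iff (p.2.2.1 _) (p.2.2.1 _)).mpr
      (p.2.1 (Fin.rev_le_rev.mpr h)),
    by
      simp_rw [← twoCount.eq_def, twoCount_twoRow (p.2.2.1 _)]
      exact (Equiv.sum_comp Fin.revPerm p.1).trans p.2.2.2⟩
  left_inv T := Subtype.ext <| funext fun i => by
    simpa using (eq_twoRow (T.2.1 i) (T.2.2.1 i)).symm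
  right_inv p := Subtype.ext <| funext fun i => by
    simpa using twoCount_twoRow (p.2.2.1 i)

variable (m : ℕ)

/- `i - 1` and `i + 1` are computed in `Fin (m + 1)` and wrap around, but only where the
coefficient (`i = 0`, resp. `i = m`) vanishes. -/
noncomputable def sl2E :
    Derivation ℚ (MvPolynomial (Fin (m + 1)) ℚ) (MvPolynomial (Fin (m + 1)) ℚ) :=
  mkDerivation ℚ fun i => ((i : ℕ) : ℚ) • X (i - 1)

noncomputable def sl2F :
    Derivation ℚ (MvPolynomial (Fin (m + 1)) ℚ) (MvPolynomial (Fin (m + 1)) ℚ) :=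
  mkDerivation ℚ fun i => ((m : ℚ) - (i : ℕ)) • X (i + 1)

noncomputable def sl2H :
    Derivation ℚ (MvPolynomial (Fin (m + 1)) ℚ) (MvPolynomial (Fin (m + 1)) ℚ) :=
  ⁅sl2E m, sl2F m⁆

variable {m}

lemma sl2E_X (i : Fin (m + 1)) : sl2E m (X i) = ((i : ℕ) : ℚ) • X (i - 1) :=
  mkDerivation_X _ _ _

lemma sl2F_X (i : Fin (m + 1)) : sl2F m (X i) = ((m : ℚ) - (i : ℕ)) • X (i + 1) :=
  mkDerivation_X _ _ _

lemma natCast_mul_val_sub_one (i : Fin (m + 1)) :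
    ((i : ℕ) : ℚ) * ((i - 1 : Fin (m + 1)) : ℕ) = (i : ℕ) * ((i : ℕ) - 1) := by
  rw [Fin.coe_sub_one]
  split_ifs with h
  · simp [h]
  · have : (i : ℕ) ≠ 0 := fun h' => h (Fin.ext h')
    rw [Nat.cast_sub (by omega), Nat.cast_one]

lemma sub_mul_val_add_one (i : Fin (m + 1)) :
    ((m : ℚ) - (i : ℕ)) * ((i + 1 : Fin (m + 1)) : ℕ) =
      ((m : ℚ) - (i : ℕ)) * ((i : ℕ) + 1) := by
  rw [Fin.val_add_one]
  split_ifs with h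
  · simp [h]
  · simp

lemma sl2H_X (i : Fin (m + 1)) : sl2H m (X i) = ((m : ℚ) - 2 * (i : ℕ)) • X i := by
  rw [sl2H, Derivation.commutator_apply, sl2F_X, sl2E_X, Derivation.map_smul,
    Derivation.map_smul, sl2E_X, sl2F_X, add_sub_cancel_right, sub_add_cancel, smul_smul,
    smul_smul, ← sub_smul]
  congr 1
  linear_combination sub_mul_val_add_one i + natCast_mul_val_sub_one i

lemma isSl2Triple (hm : m ≠ 0) : IsSl2Triple (sl2H m) (sl2E m) (sl2F m) where
  h_ne_zero h := by
    have := congrArg (· (X 0)) h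
    simp [sl2H_X, hm, X_ne_zero] at this
  lie_e_f := rfl
  lie_h_e_nsmul := derivation_ext fun i => by
    rw [Derivation.commutator_apply, sl2E_X, Derivation.map_smul, sl2H_X, sl2H_X,
      Derivation.map_smul, sl2E_X, smul_smul, smul_smul, ← sub_smul, Derivation.smul_apply, sl2E_X,
      ← Nat.cast_smul_eq_nsmul ℚ, smul_smul]
    congr 1
    linear_combination (-2 : ℚ) * natCast_mul_val_sub_one i
  lie_h_f_nsmul := derivation_ext fun i => by
    rw [Derivation.commutator_apply, sl2F_X, Derivation.map_smul, sl2H_X, sl2H_X,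
      Derivation.map_smul, sl2F_X, smul_smul, smul_smul, ← sub_smul, Derivation.neg_apply,
      Derivation.smul_apply, sl2F_X, ← Nat.cast_smul_eq_nsmul ℚ, smul_smul, ← neg_smul]
    congr 1
    linear_combination (-2 : ℚ) * sub_mul_val_add_one i

def bidegree (m : ℕ) (i : Fin (m + 1)) : ℕ × ℤ := (1, i)

abbrev weightSpace (m n : ℕ) (t : ℤ) : Submodule ℚ (MvPolynomial (Fin (m + 1)) ℚ) :=
  weightedHomogeneousSubmodule ℚ (bidegree m) (n, t)

lemma weight_bidegree (d : Fin (m + 1) →₀ ℕ) :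
    Finsupp.weight (bidegree m) d = (Finsupp.degree d, ∑ i, (d i : ℤ) * (i : ℕ)) := by
  simp [Finsupp.weight_eq_sum, Finsupp.degree_eq_sum, bidegree, Prod.ext_iff, Prod.fst_sum,
    Prod.snd_sum]

lemma sl2E_mem_weightSpace {n : ℕ} {t : ℤ} {φ : MvPolynomial (Fin (m + 1)) ℚ}
    (hφ : φ ∈ weightSpace m n t) : sl2E m φ ∈ weightSpace m n (t - 1) := by
  have := (sl2E m).mem_weightedHomogeneousSubmodule_add (δ := (0, -1)) (fun i => ?_) hφ
  · simpa [sub_eq_add_neg] using this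
  rw [sl2E_X]
  by_cases hi : i = 0
  · simp [hi]
  · refine Submodule.smul_mem _ _ ?_
    have : (i : ℕ) ≠ 0 := fun h => hi (Fin.ext h)
    have hdeg : bidegree m i + (0, -1) = bidegree m (i - 1) := by
      simp only [bidegree, Prod.mk_add_mk, add_zero, Prod.mk.injEq, true_and]
      rw [Fin.coe_sub_one, if_neg hi, Nat.cast_sub (Nat.one_le_iff_ne_zero.mpr this)]
      push_cast
      ring
    rw [hdeg]
    exact isWeightedHomogeneous_X ℚ (bidegree m) (i - 1)

lemma sl2F_mem_weightSpace {n : ℕ} {t : ℤ} {φ : MvPolynomial (Fin (m + 1)) ℚ}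
    (hφ : φ ∈ weightSpace m n t) : sl2F m φ ∈ weightSpace m n (t + 1) := by
  have := (sl2F m).mem_weightedHomogeneousSubmodule_add (δ := (0, 1)) (fun i => ?_) hφ
  · simpa using this
  rw [sl2F_X]
  by_cases hi : i = Fin.last m
  · simp [hi]
  · refine Submodule.smul_mem _ _ ?_
    have hdeg : bidegree m i + (0, 1) = bidegree m (i + 1) := by
      simp [bidegree, Fin.val_add_one, hi]
    rw [hdeg]
    exact isWeightedHomogeneous_X ℚ (bidegree m) (i + 1)

lemma sl2H_eq_smul_of_mem_weightSpace {n : ℕ} {t : ℤ} {φ : MvPolynomial (Fin (m + 1)) ℚ}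
    (hφ : φ ∈ weightSpace m n t) : sl2H m φ = ((m : ℚ) * n - 2 * t) • φ := by
  let ℓ : ℕ × ℤ →+ ℚ := (m : ℚ) • (Nat.castAddMonoidHom ℚ).comp (AddMonoidHom.fst ℕ ℤ) -
    (2 : ℚ) • (Int.castAddHom ℚ).comp (AddMonoidHom.snd ℕ ℤ)
  have := (sl2H m).eq_smul_of_mem_weightedHomogeneousSubmodule ℓ (fun i => ?_) hφ
  · simpa [ℓ] using this
  simp [ℓ, sl2H_X, bidegree]

lemma weightSpace_eq_bot {n : ℕ} {t : ℤ} (ht : t < 0) : weightSpace m n t = ⊥ := by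
  refine (Submodule.eq_bot_iff _).mpr fun φ hφ => ?_
  ext d
  by_contra hd
  have := congrArg Prod.snd (hφ hd)
  rw [weight_bidegree] at this
  have : 0 ≤ ∑ i, (d i : ℤ) * (i : ℕ) := by positivity
  omega

lemma pow_sl2E_mem_weightSpace {n : ℕ} {t : ℤ} {φ : MvPolynomial (Fin (m + 1)) ℚ}
    (hφ : φ ∈ weightSpace m n t) (k : ℕ) :
    (LieModule.toEnd ℚ _ _ (sl2E m) ^ k) φ ∈ weightSpace m n (t - k) := by
  induction k with
  | zero => simpa using hφ
  | succ k ih =>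
    rw [pow_succ', Module.End.mul_apply, LieModule.toEnd_apply_apply, Derivation.bracket_eq_fun]
    convert sl2E_mem_weightSpace ih using 2
    push_cast
    ring

lemma eq_zero_of_sl2F_eq_zero {n t : ℕ} (ht : 2 * t < m * n) {φ : MvPolynomial (Fin (m + 1)) ℚ}
    (hφ : φ ∈ weightSpace m n t) (hF : sl2F m φ = 0) : φ = 0 := by
  by_contra hφ0
  have hm : m ≠ 0 := by rintro rfl; simp at ht
  have P : (isSl2Triple hm).symm.HasPrimitiveVectorWith φ (-((m : ℚ) * n - 2 * t)) :=
    ⟨hφ0, by rw [neg_lie, Derivation.bracket_eq_fun, sl2H_eq_smul_of_mem_weightSpace hφ, neg_smul,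
      Int.cast_natCast], by rw [Derivation.bracket_eq_fun, hF]⟩
  refine P.pow_toEnd_f_ne_zero_of_forall_ne_nat (fun k hk => ?_) (t + 1) ?_
  · have : (2 * t : ℚ) < m * n := by exact_mod_cast ht
    linarith [k.cast_nonneg (α := ℚ)]
  · simpa [weightSpace_eq_bot] using pow_sl2E_mem_weightSpace hφ (t + 1)

lemma weight_bidegree_toFinsupp_ofFn {m n : ℕ} (q : Fin n → Fin (m + 1)) :
    Finsupp.weight (bidegree m) (Multiset.toFinsupp (List.ofFn q)) =
      (n, ∑ j, ((q j : ℕ) : ℤ)) := by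
  rw [Finsupp.weight_toFinsupp, Multiset.map_coe, Multiset.sum_coe, List.map_ofFn, List.sum_ofFn]
  simp [bidegree, Prod.ext_iff, Prod.fst_sum, Prod.snd_sum]

noncomputable def boxPartitionEquiv (m n t : ℕ) :
    BoxPartition m n t ≃ {d : Fin (m + 1) →₀ ℕ | Finsupp.weight (bidegree m) d = (n, (t : ℤ))} :=
  Equiv.ofBijective
    (fun p => ⟨Multiset.toFinsupp
        (List.ofFn fun j => (⟨p.1 j, Nat.lt_succ_of_le (p.2.2.1 j)⟩ : Fin (m + 1))),
      by simp [weight_bidegree_toFinsupp_ofFn, ← p.2.2.2]⟩)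
    ⟨fun p p' h => by
      have := Antitone.eq_of_coe_ofFn_eq (fun a b hab => Fin.mk_le_mk.mpr (p.2.1 hab))
        (fun a b hab => Fin.mk_le_mk.mpr (p'.2.1 hab))
        (Multiset.toFinsupp.injective (congrArg Subtype.val h))
      exact Subtype.ext (funext fun j => congrArg Fin.val (congrFun this j)),
    fun ⟨d, hd⟩ => by
      have hdeg : Finsupp.degree d = n := by
        simpa [weight_bidegree] using congrArg Prod.fst hd
      obtain ⟨q, hq, hqd⟩ := (Finsupp.toMultiset d).exists_antitone_coe_ofFn_eq (n := n)
        (by rwa [Finsupp.card_toMultiset])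
      have hsum : ∑ j, ((q j : ℕ) : ℤ) = t := by
        have := weight_bidegree_toFinsupp_ofFn q
        rw [hqd, Finsupp.toMultiset_toFinsupp, hd, Prod.mk.injEq] at this
        exact this.2.symm
      exact ⟨⟨fun j => q j, fun a b hab => hq hab, fun j => Fin.is_le _, by exact_mod_cast hsum⟩,
        Subtype.ext (by simp [hqd])⟩⟩

instance (m n t : ℕ) :
    Finite {d : Fin (m + 1) →₀ ℕ | Finsupp.weight (bidegree m) d = (n, (t : ℤ))} :=
  ((Finsupp.finite_of_degree_eq n).subset fun d hd => by
    simpa [weight_bidegree] using congrArg Prod.fst hd).to_subtype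

lemma finrank_weightSpace (m n t : ℕ) :
    Module.finrank ℚ (weightSpace m n t) = Nat.card (BoxPartition m n t) := by
  rw [finrank_weightedHomogeneousSubmodule, Nat.card_congr (boxPartitionEquiv m n t)]

theorem card_boxPartition_le_succ {m n t : ℕ} (ht : 2 * t < m * n) :
    Nat.card (BoxPartition m n t) ≤ Nat.card (BoxPartition m n (t + 1)) := by
  rw [← finrank_weightSpace, ← finrank_weightSpace]
  let F : weightSpace m n t →ₗ[ℚ] weightSpace m n (t + 1 : ℕ) :=
    (sl2F m).toLinearMap.restrict fun φ hφ => by exact_mod_cast sl2F_mem_weightSpace hφ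
  refine LinearMap.finrank_le_finrank_of_injective (f := F) ((injective_iff_map_eq_zero F).mpr ?_)
  exact fun φ hφ => Subtype.ext (eq_zero_of_sl2F_eq_zero ht φ.2 (congrArg Subtype.val hφ))

end CayleySylvester

theorem cayley_sylvester_bijection_general (m n L : ℕ) (h2 : 2 * L ≤ m * n) :
    Nonempty
      ({T : Fin n → Fin m → ℕ //
          (∀ i j, T i j = 1 ∨ T i j = 2) ∧
          (∀ i, Monotone (T i)) ∧
          (∀ i₁ i₂ : Fin n, i₁ ≤ i₂ → ColexLeRow m (T i₁) (T i₂)) ∧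
          (∑ i, (Finset.univ.filter fun j => T i j = 2).card) = L} ≃
        {p : Fin n → ℕ // Antitone p ∧ (∀ i, p i ≤ m) ∧ ∑ i, p i = L}) ∧
    Nat.card {p : Fin n → ℕ // Antitone p ∧ (∀ i, p i ≤ m) ∧ ∑ i, p i = L - 1} ≤
      Nat.card {p : Fin n → ℕ // Antitone p ∧ (∀ i, p i ≤ m) ∧ ∑ i, p i = L} := by
  refine ⟨⟨CayleySylvester.plethysticTableauEquiv m n L⟩, ?_⟩
  rcases L with _ | l
  · exact le_rfl
  · exact CayleySylvester.card_boxPartition_le_succ (by omega)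

/-- **Cayley–Sylvester, bijective form.** For `1 ≤ ℓ ≤ mn/2` there is a
bijection between plethystic semistandard tableaux of outer shape `(n)`, inner shape `(m)`
with entries in `{1,2}` and total number of `2`s equal to `ℓ` (a weakly colex-increasing
sequence of `n` weakly increasing rows), and partitions of `ℓ` contained in an `m × n`
box; consequently the number of box partitions of `ℓ - 1` is at most that of `ℓ`. -/
theorem cayley_sylvester_bijection (m n L : ℕ) (h1 : 1 ≤ L) (h2 : 2 * L ≤ m * n) :
    Nonempty
      ({T : Fin n → Fin m → ℕ //
          (∀ i j, T i j = 1 ∨ T i j = 2) ∧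
          (∀ i, Monotone (T i)) ∧
          (∀ i₁ i₂ : Fin n, i₁ ≤ i₂ → ColexLeRow m (T i₁) (T i₂)) ∧
          (∑ i, (Finset.univ.filter fun j => T i j = 2).card) = L} ≃
        {p : Fin n → ℕ // Antitone p ∧ (∀ i, p i ≤ m) ∧ ∑ i, p i = L}) ∧
    Nat.card {p : Fin n → ℕ // Antitone p ∧ (∀ i, p i ≤ m) ∧ ∑ i, p i = L - 1} ≤
      Nat.card {p : Fin n → ℕ // Antitone p ∧ (∀ i, p i ≤ m) ∧ ∑ i, p i = L} :=
  cayley_sylvester_bijection_general m n L h2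
end

section
/- Fix ℓ⁻ ∈ ℕ and a skew partition τ/τ*. Let t be the semistandard signed tableau of shape τ/τ* constructed greedily: in each row i, place min(ℓ⁻, τ_i − τ*_i) negative entries −1, −2, ..., −min(ℓ⁻, ...) from left to right; then fill the remaining boxes of each column j from top to bottom with 1, 2, 3, .... Let (ω⁻, ω⁺) be the signed weight of t, where ω⁻_k counts entries −k and ω⁺_k counts entries k. Then ω⁻ and ω⁺ are both partitions (weakly decreasing), and for any semistandard signed tableau s of shape τ/τ* with negative entries from {−1,...,−ℓ⁻}, the concatenated signed weight of s is dominated by (ω⁻, ω⁺) in the dominance order on concatenated sequences (negative part first, padded to ℓ⁻ entries). -/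
open scoped Classical

/-- Box `(i, j)` (0-indexed) belongs to the skew shape `τ/τs`. -/
def InShape (τ τs : ℕ → ℕ) (i j : ℕ) : Prop := τs i ≤ j ∧ j < τ i

/-- The order `-1 < -2 < ⋯ < 1 < 2 < ⋯` on nonzero integers (weak comparison). -/
def sle (a b : ℤ) : Prop :=
  (a < 0 ∧ 0 < b) ∨ (a < 0 ∧ b < 0 ∧ b ≤ a) ∨ (0 < a ∧ 0 < b ∧ a ≤ b)

/-- A semistandard signed tableau of skew shape `τ/τs`: nonzero entries exactly on the
shape, rows and columns weakly increasing for the order `-1 < -2 < ⋯ < 1 < 2 < ⋯`, equal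
negative entries never adjacent in a row (vertical strips) and equal positive entries
never adjacent in a column (horizontal strips). -/
def IsSignedSSYT (τ τs : ℕ → ℕ) (T : ℕ → ℕ → ℤ) : Prop :=
  (∀ i j, InShape τ τs i j → T i j ≠ 0) ∧
  (∀ i j, ¬ InShape τ τs i j → T i j = 0) ∧
  (∀ i j, InShape τ τs i j → InShape τ τs i (j + 1) →
    sle (T i j) (T i (j + 1)) ∧ (T i j < 0 → T i j ≠ T i (j + 1))) ∧
  (∀ i j, InShape τ τs i j → InShape τ τs (i + 1) j →
    sle (T i j) (T (i + 1) j) ∧ (0 < T i j → T i j ≠ T (i + 1) j))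

/-- The greedy greatest semistandard signed tableau `t_l(τ/τs)`: in each row the first
`min(l, row length)` boxes receive `-1, -2, …` from left to right, and the remaining boxes
of each column receive `1, 2, 3, …` from top to bottom. -/
noncomputable def greatestT (l : ℕ) (τ τs : ℕ → ℕ) : ℕ → ℕ → ℤ :=
  fun i j =>
    if InShape τ τs i j then
      if j - τs i < l then -((j : ℤ) - (τs i : ℤ) + 1)
      else (Set.ncard {i' : ℕ | i' ≤ i ∧ InShape τ τs i' j ∧ l ≤ j - τs i'} : ℤ)
    else 0

/-- `wtNeg τ τs T k` is the number of entries of `T` equal to `-(k+1)`; so this is the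
negative part `α⁻` of the signed weight (0-indexed). -/
noncomputable def wtNeg (τ τs : ℕ → ℕ) (T : ℕ → ℕ → ℤ) (k : ℕ) : ℕ :=
  Set.ncard {p : ℕ × ℕ | InShape τ τs p.1 p.2 ∧ T p.1 p.2 = -((k : ℤ) + 1)}

/-- `wtPos τ τs T k` is the number of entries of `T` equal to `k+1`; the positive part
`α⁺` of the signed weight (0-indexed). -/
noncomputable def wtPos (τ τs : ℕ → ℕ) (T : ℕ → ℕ → ℤ) (k : ℕ) : ℕ :=
  Set.ncard {p : ℕ × ℕ | InShape τ τs p.1 p.2 ∧ T p.1 p.2 = (k : ℤ) + 1}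

/-- The concatenation `(a_1, …, a_l, b_1, b_2, …)` of a signed weight. -/
def concatW (l : ℕ) (a b : ℕ → ℕ) : ℕ → ℕ :=
  fun i => if i < l then a i else b (i - l)

open Finset

/-!
In a semistandard signed tableau `T` the negative entries of a row strictly decrease (as
integers) from left to right, and the positive entries of a column strictly increase downwards.

For `k ≤ l` the first `k` letters of the alphabet are `-1, …, -k`, and a row of length `r`
holds at most `min k r` of them; the greedy tableau `t` attains this in every row.

For `k = l + m` count column by column. If all entries are `≥ -l`, a negative entry sits among
the first `l` cells of its row, so a column of `T` has no more negative entries than the same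
column of `t`, and at most `m` entries from `1, …, m`. So it holds at most
`min (column length) (#negative entries of t + m)` of the first `k` letters, which is exactly
the count for `t`, whose positive entries in a column are `1, 2, 3, …` from the top.
-/

lemma IsPartition.antitone {f : ℕ → ℕ} (hf : IsPartition f) : Antitone f :=
  fun _ _ h => hf.1 _ _ h

section Shape

variable {τ τs : ℕ → ℕ} {i j : ℕ}

lemma InShape.of_row {j₁ j₂ : ℕ} (h₁ : InShape τ τs i j₁) (h₂ : InShape τ τs i j₂)
    (h : j₁ ≤ j) (h' : j ≤ j₂) : InShape τ τs i j :=
  ⟨h₁.1.trans h, h'.trans_lt h₂.2⟩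

lemma InShape.of_col (hτ : Antitone τ) (hτs : Antitone τs) {i₁ i₂ : ℕ}
    (h₁ : InShape τ τs i₁ j) (h₂ : InShape τ τs i₂ j) (h : i₁ ≤ i) (h' : i ≤ i₂) :
    InShape τ τs i j :=
  ⟨(hτs h).trans h₁.1, h₂.2.trans_le (hτ h')⟩

lemma InShape.lt_apply_zero (hτ : Antitone τ) (h : InShape τ τs i j) : j < τ 0 :=
  h.2.trans_le (hτ (Nat.zero_le i))

lemma InShape.lt_of_eq_zero {R : ℕ} (hR : ∀ i, R ≤ i → τ i = 0) (h : InShape τ τs i j) :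
    i < R := by
  by_contra hi
  have := h.2
  rw [hR i (by omega)] at this
  omega

lemma finite_setOf_inShape {R : ℕ} (hR : ∀ i, R ≤ i → τ i = 0) (hτ : Antitone τ) :
    {p : ℕ × ℕ | InShape τ τs p.1 p.2}.Finite :=
  ((Set.finite_Iio R).prod (Set.finite_Iio (τ 0))).subset
    fun _ h => ⟨InShape.lt_of_eq_zero hR h, InShape.lt_apply_zero hτ h⟩

end Shape

theorem Finset.card_filter_card_filter_le_le {α : Type*} [LinearOrder α] (S : Finset α) (m : ℕ) :
    #{i ∈ S | #{i' ∈ S | i' ≤ i} ≤ m} = min m #S := by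
  induction S using Finset.induction_on_max with
  | empty => simp
  | insert a s hlt ih =>
    have ha : a ∉ s := fun h => lt_irrefl a (hlt a h)
    have hrank : ∀ i ∈ s, {i' ∈ insert a s | i' ≤ i} = {i' ∈ s | i' ≤ i} := fun i hi => by
      rw [filter_insert, if_neg (hlt i hi).not_ge]
    have htop : {i' ∈ insert a s | i' ≤ a} = insert a s :=
      filter_true_of_mem fun x hx => (mem_insert.1 hx).elim le_of_eq fun h => (hlt x h).le
    rw [filter_insert, htop, card_insert_of_notMem ha,
      filter_congr fun i hi => by rw [hrank i hi]]
    split_ifs with h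
    · rw [card_insert_of_notMem fun h' => ha (mem_filter.1 h').1, ih]
      omega
    · rw [ih]
      omega

namespace IsSignedSSYT

variable {τ τs : ℕ → ℕ} {T : ℕ → ℕ → ℤ} {i j : ℕ}

lemma neg_chain_row (hT : IsSignedSSYT τ τs T) {d : ℕ} (h : InShape τ τs i j)
    (h' : InShape τ τs i (j + d)) (hneg : T i (j + d) < 0) :
    T i j < 0 ∧ T i (j + d) + d ≤ T i j := by
  induction d with
  | zero => simpa using hneg
  | succ d ih =>
    rw [← add_assoc] at h' hneg ⊢
    have hmid : InShape τ τs i (j + d) := h.of_row h' (by omega) (by omega)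
    have hstep := hT.2.2.1 i (j + d) hmid h'
    unfold sle at hstep
    have := ih hmid (by omega)
    push_cast
    omega

lemma pos_chain_col (hτ : Antitone τ) (hτs : Antitone τs) (hT : IsSignedSSYT τ τs T) {d : ℕ}
    (h : InShape τ τs i j) (h' : InShape τ τs (i + d) j) (hpos : 0 < T i j) :
    T i j + d ≤ T (i + d) j := by
  induction d with
  | zero => simp
  | succ d ih =>
    rw [← add_assoc] at h' ⊢
    have hmid : InShape τ τs (i + d) j := h.of_col hτ hτs h' (by omega) (by omega)
    have hstep := hT.2.2.2 (i + d) j hmid h'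
    unfold sle at hstep
    have := ih hmid
    push_cast
    omega

lemma strictAntiOn_row (hT : IsSignedSSYT τ τs T) (i : ℕ) :
    StrictAntiOn (T i) {j | InShape τ τs i j ∧ T i j < 0} := by
  rintro j ⟨h, -⟩ j' ⟨h', hneg⟩ hjj'
  obtain ⟨d, rfl⟩ := Nat.exists_eq_add_of_le hjj'.le
  have := (hT.neg_chain_row h h' hneg).2
  omega

lemma strictMonoOn_col (hτ : Antitone τ) (hτs : Antitone τs) (hT : IsSignedSSYT τ τs T)
    (j : ℕ) : StrictMonoOn (fun i => T i j) {i | InShape τ τs i j ∧ 0 < T i j} := by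
  rintro i ⟨h, hpos⟩ i' ⟨h', -⟩ hii'
  obtain ⟨d, rfl⟩ := Nat.exists_eq_add_of_le hii'.le
  have := hT.pos_chain_col hτ hτs h h' hpos
  show T i j < T (i + d) j
  omega

lemma lt_add_of_neg {l : ℕ} (hT : IsSignedSSYT τ τs T)
    (hl : ∀ i j, InShape τ τs i j → T i j < 0 → -(l : ℤ) ≤ T i j)
    (h : InShape τ τs i j) (hneg : T i j < 0) : j < τs i + l := by
  obtain ⟨d, rfl⟩ := Nat.exists_eq_add_of_le h.1
  have := hT.neg_chain_row ⟨le_rfl, by have := h.2; omega⟩ h hneg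
  have := hl i _ h hneg
  omega

lemma card_row_neg_le (hT : IsSignedSSYT τ τs T) (C k i : ℕ) :
    #{j ∈ range C | InShape τ τs i j ∧ -(k : ℤ) ≤ T i j ∧ T i j < 0} ≤ min k (τ i - τs i) := by
  refine le_min ?_ ?_
  · calc _ ≤ #(Icc (-(k : ℤ)) (-1)) :=
          card_le_card_of_injOn (T i) (fun j hj => by
            simp only [coe_filter, Set.mem_ofPred_eq, coe_Icc, Set.mem_Icc] at hj ⊢
            omega)
            ((hT.strictAntiOn_row i).injOn.mono fun j hj => by simp_all)
      _ = k := by simp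
  · calc _ ≤ #(Ico (τs i) (τ i)) := card_le_card fun j hj => mem_Ico.2 (mem_filter.1 hj).2.1
      _ = _ := Nat.card_Ico _ _

lemma card_col_le {l : ℕ} (hτ : Antitone τ) (hτs : Antitone τs) (hT : IsSignedSSYT τ τs T)
    (hl : ∀ i j, InShape τ τs i j → T i j < 0 → -(l : ℤ) ≤ T i j) (R j m : ℕ) :
    #{i ∈ range R | InShape τ τs i j ∧
        ((-(l : ℤ) ≤ T i j ∧ T i j < 0) ∨ (0 < T i j ∧ T i j ≤ m))} ≤
      min #{i ∈ range R | InShape τ τs i j}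
        (#{i ∈ range R | InShape τ τs i j ∧ j < τs i + l} + m) := by
  refine le_min (card_le_card fun i hi => by simp_all) ?_
  calc _ ≤ #({i ∈ range R | InShape τ τs i j ∧ T i j < 0} ∪
          {i ∈ range R | InShape τ τs i j ∧ 0 < T i j ∧ T i j ≤ m}) :=
        card_le_card fun i hi => by
          simp only [mem_union, mem_filter] at hi ⊢
          rcases hi with ⟨hR, h, ⟨-, hneg⟩ | hpos⟩
          exacts [Or.inl ⟨hR, h, hneg⟩, Or.inr ⟨hR, h, hpos⟩]
    _ ≤ _ := (card_union_le _ _).trans (add_le_add ?_ ?_)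
  · exact card_le_card fun i hi => by
      simp only [mem_filter] at hi ⊢
      exact ⟨hi.1, hi.2.1, hT.lt_add_of_neg hl hi.2.1 hi.2.2⟩
  · calc _ ≤ #(Icc (1 : ℤ) m) :=
          card_le_card_of_injOn (fun i => T i j) (fun i hi => by
            simp only [coe_filter, Set.mem_ofPred_eq, coe_Icc, Set.mem_Icc] at hi ⊢
            omega)
            ((hT.strictMonoOn_col hτ hτs j).injOn.mono fun i hi => by simp_all)
      _ = m := by simp

end IsSignedSSYT

namespace SignedTableau

section Greedy

variable {l : ℕ} {τ τs : ℕ → ℕ} {i j k : ℕ}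

noncomputable def firstPosRow (l : ℕ) (τs : ℕ → ℕ) (j : ℕ) : ℕ := sInf {i | τs i + l ≤ j}

lemma firstPosRow_le (h : τs i + l ≤ j) : firstPosRow l τs j ≤ i := Nat.sInf_le h

lemma firstPosRow_spec (hτs : IsPartition τs) (hj : l ≤ j) :
    τs (firstPosRow l τs j) + l ≤ j := by
  obtain ⟨N, hN⟩ := hτs.2
  exact Nat.sInf_mem (s := {i | τs i + l ≤ j}) ⟨N, show τs N + l ≤ j by rw [hN N le_rfl]; omega⟩

lemma greatestT_of_lt (h : InShape τ τs i j) (hj : j < τs i + l) :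
    greatestT l τ τs i j = -((j : ℤ) - τs i + 1) := by
  rw [greatestT, if_pos h, if_pos (by have := h.1; omega)]

lemma greatestT_of_le (hτ : Antitone τ) (hτs : IsPartition τs) (h : InShape τ τs i j)
    (hj : τs i + l ≤ j) : greatestT l τ τs i j = ((i + 1 - firstPosRow l τs j : ℕ) : ℤ) := by
  have hcol : {i' | i' ≤ i ∧ InShape τ τs i' j ∧ l ≤ j - τs i'} =
      Set.Icc (firstPosRow l τs j) i := by
    ext i'
    simp only [Set.mem_ofPred_eq, Set.mem_Icc]
    constructor
    · rintro ⟨hi', hs, hl⟩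
      exact ⟨firstPosRow_le (by have := hs.1; omega), hi'⟩
    · rintro ⟨hfirst, hi'⟩
      have := hτs.antitone hfirst
      have := firstPosRow_spec hτs (l := l) (j := j) (by omega)
      have := hτ hi'
      have := h.2
      exact ⟨hi', ⟨by omega, by omega⟩, by omega⟩
  rw [greatestT, if_pos h, if_neg (by have := h.1; omega), hcol, ← coe_Icc,
    Set.ncard_coe_finset, Nat.card_Icc]

lemma greatestT_neg_iff (hτ : Antitone τ) (hτs : IsPartition τs) (h : InShape τ τs i j) :
    greatestT l τ τs i j < 0 ↔ j < τs i + l := by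
  by_cases hj : j < τs i + l
  · rw [greatestT_of_lt h hj]
    have := h.1
    omega
  · rw [greatestT_of_le hτ hτs h (by omega)]
    omega

lemma greatestT_pos_iff (hτ : Antitone τ) (hτs : IsPartition τs) (h : InShape τ τs i j) :
    0 < greatestT l τ τs i j ↔ τs i + l ≤ j := by
  by_cases hj : j < τs i + l
  · rw [greatestT_of_lt h hj]
    have := h.1
    omega
  · rw [greatestT_of_le hτ hτs h (by omega)]
    have := firstPosRow_le (i := i) (by omega : τs i + l ≤ j)
    omega

lemma greatestT_eq_neg_iff (hτ : Antitone τ) (hτs : IsPartition τs) (h : InShape τ τs i j) :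
    greatestT l τ τs i j = -((k : ℤ) + 1) ↔ j = τs i + k ∧ k < l := by
  by_cases hj : j < τs i + l
  · rw [greatestT_of_lt h hj]
    have := h.1
    omega
  · rw [greatestT_of_le hτ hτs h (by omega)]
    omega

lemma greatestT_eq_pos_iff (hτ : Antitone τ) (hτs : IsPartition τs) (h : InShape τ τs i j) :
    greatestT l τ τs i j = (k : ℤ) + 1 ↔ τs i + l ≤ j ∧ i = firstPosRow l τs j + k := by
  by_cases hj : j < τs i + l
  · rw [greatestT_of_lt h hj]
    have := h.1
    omega
  · rw [greatestT_of_le hτ hτs h (by omega)]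
    have := firstPosRow_le (i := i) (by omega : τs i + l ≤ j)
    omega

theorem isSignedSSYT_greatestT (hτ : Antitone τ) (hτs : IsPartition τs) :
    IsSignedSSYT τ τs (greatestT l τ τs) := by
  refine ⟨fun i j h => ?_, fun i j h => by rw [greatestT, if_neg h], fun i j h h' => ?_,
    fun i j h h' => ?_⟩
  · have := greatestT_neg_iff (l := l) hτ hτs h
    have := greatestT_pos_iff (l := l) hτ hτs h
    omega
  · have := h.1
    unfold sle
    by_cases hj : j + 1 < τs i + l
    · rw [greatestT_of_lt h (by omega), greatestT_of_lt h' hj]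
      omega
    by_cases hj' : j < τs i + l
    · rw [greatestT_of_lt h hj', greatestT_of_le hτ hτs h' (by omega)]
      have := firstPosRow_le (i := i) (by omega : τs i + l ≤ j + 1)
      omega
    · rw [greatestT_of_le hτ hτs h (by omega), greatestT_of_le hτ hτs h' (by omega)]
      have := firstPosRow_le (i := i) (by omega : τs i + l ≤ j)
      have := firstPosRow_le (l := l) (τs := τs) (i := firstPosRow l τs j) (j := j + 1)
        (by have := firstPosRow_spec hτs (l := l) (j := j) (by omega); omega)
      omega
  · have := h.1
    have := h'.1
    have : τs (i + 1) ≤ τs i := hτs.antitone (Nat.le_succ i)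
    unfold sle
    by_cases hj : j < τs (i + 1) + l
    · rw [greatestT_of_lt h (by omega), greatestT_of_lt h' hj]
      omega
    by_cases hj' : j < τs i + l
    · rw [greatestT_of_lt h hj', greatestT_of_le hτ hτs h' (by omega)]
      have := firstPosRow_le (i := i + 1) (by omega : τs (i + 1) + l ≤ j)
      omega
    · rw [greatestT_of_le hτ hτs h (by omega), greatestT_of_le hτ hτs h' (by omega)]
      have := firstPosRow_le (i := i) (by omega : τs i + l ≤ j)
      omega

end Greedy

section Weights

variable {l : ℕ} {τ τs : ℕ → ℕ}

lemma finite_setOf_inShape_and (hτ : IsPartition τ) (P : ℕ × ℕ → Prop) :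
    {p : ℕ × ℕ | InShape τ τs p.1 p.2 ∧ P p}.Finite := by
  obtain ⟨R, hR⟩ := hτ.2
  exact (finite_setOf_inShape hR hτ.antitone).subset fun _ h => h.1

theorem isPartition_wtNeg_greatestT (hτ : IsPartition τ) (hτs : IsPartition τs) :
    IsPartition (wtNeg τ τs (greatestT l τ τs)) := by
  refine ⟨fun a b hab => antitone_nat_of_succ_le (fun k => ?_) hab, l, fun k hk => ?_⟩
  · refine Set.ncard_le_ncard_of_injOn (fun p => (p.1, p.2 - 1)) ?_ ?_
      (finite_setOf_inShape_and hτ _)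
    · rintro ⟨i, j⟩ ⟨h, hk⟩
      dsimp only at h hk ⊢
      rw [greatestT_eq_neg_iff hτ.antitone hτs h] at hk
      have h' : InShape τ τs i (j - 1) := ⟨by omega, by have := h.2; omega⟩
      exact ⟨h', (greatestT_eq_neg_iff hτ.antitone hτs h').2 (by omega)⟩
    · rintro ⟨i, j⟩ ⟨h, hk⟩ ⟨i', j'⟩ ⟨h', hk'⟩ heq
      dsimp only at h hk h' hk'
      rw [greatestT_eq_neg_iff hτ.antitone hτs h] at hk
      rw [greatestT_eq_neg_iff hτ.antitone hτs h'] at hk'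
      simp only [Prod.mk.injEq] at heq ⊢
      omega
  · rw [wtNeg, Set.ncard_eq_zero (finite_setOf_inShape_and hτ _), Set.eq_empty_iff_forall_notMem]
    rintro ⟨i, j⟩ ⟨h, hk'⟩
    rw [greatestT_eq_neg_iff hτ.antitone hτs h] at hk'
    omega

theorem isPartition_wtPos_greatestT (hτ : IsPartition τ) (hτs : IsPartition τs) :
    IsPartition (wtPos τ τs (greatestT l τ τs)) := by
  obtain ⟨R, hR⟩ := hτ.2
  refine ⟨fun a b hab => antitone_nat_of_succ_le (fun k => ?_) hab, R, fun k hk => ?_⟩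
  · refine Set.ncard_le_ncard_of_injOn (fun p => (p.1 - 1, p.2)) ?_ ?_
      (finite_setOf_inShape_and hτ _)
    · rintro ⟨i, j⟩ ⟨h, hk⟩
      dsimp only at h hk ⊢
      rw [greatestT_eq_pos_iff hτ.antitone hτs h] at hk
      have hl : l ≤ j := by have := h.1; omega
      have hfirst := firstPosRow_spec hτs hl
      have := hτs.antitone (show firstPosRow l τs j ≤ i - 1 by omega)
      have := hτ.antitone (show i - 1 ≤ i by omega)
      have h' : InShape τ τs (i - 1) j := ⟨by omega, by have := h.2; omega⟩
      exact ⟨h', (greatestT_eq_pos_iff hτ.antitone hτs h').2 ⟨by omega, by omega⟩⟩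
    · rintro ⟨i, j⟩ ⟨h, hk⟩ ⟨i', j'⟩ ⟨h', hk'⟩ heq
      dsimp only at h hk h' hk'
      rw [greatestT_eq_pos_iff hτ.antitone hτs h] at hk
      rw [greatestT_eq_pos_iff hτ.antitone hτs h'] at hk'
      simp only [Prod.mk.injEq] at heq ⊢
      obtain ⟨hi, rfl⟩ := heq
      omega
  · rw [wtPos, Set.ncard_eq_zero (finite_setOf_inShape_and hτ _), Set.eq_empty_iff_forall_notMem]
    rintro ⟨i, j⟩ ⟨h, hk'⟩
    rw [greatestT_eq_pos_iff hτ.antitone hτs h] at hk'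
    have := InShape.lt_of_eq_zero hR h
    omega

end Weights

section Counting

variable {l : ℕ} {τ τs : ℕ → ℕ} {R : ℕ}

lemma ncard_eq_card_filter_product (hτ : Antitone τ) (hR : ∀ i, R ≤ i → τ i = 0)
    {P : ℕ × ℕ → Prop} [DecidablePred P] (hP : ∀ p, P p → InShape τ τs p.1 p.2) :
    {p | P p}.ncard = #{p ∈ range R ×ˢ range (τ 0) | P p} := by
  rw [← Set.ncard_coe_finset, coe_filter]
  congr 1
  ext p
  simp only [Set.mem_ofPred_eq, mem_product, mem_range]
  exact ⟨fun h => ⟨⟨(hP p h).lt_of_eq_zero hR, (hP p h).lt_apply_zero hτ⟩, h⟩, And.right⟩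

/-- The `i`-th letter (from `0`) of the alphabet `-1 < ⋯ < -l < 1 < 2 < ⋯`, so that
`concatW l (wtNeg τ τs T) (wtPos τ τs T) i` counts the entries of `T` equal to it. -/
def letter (l i : ℕ) : ℤ := if i < l then -((i : ℤ) + 1) else ((i - l : ℕ) : ℤ) + 1

def lowLetters (l k : ℕ) : Finset ℤ := (range k).image (letter l)

lemma letter_injective : Function.Injective (letter l) := by
  intro a b h
  unfold letter at h
  split_ifs at h <;> omega

lemma mem_lowLetters {k : ℕ} {z : ℤ} :
    z ∈ lowLetters l k ↔ (-(min k l : ℤ) ≤ z ∧ z < 0) ∨ (0 < z ∧ z ≤ ((k - l : ℕ) : ℤ)) := by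
  simp only [lowLetters, mem_image, mem_range, letter]
  constructor
  · rintro ⟨i, hi, rfl⟩
    split_ifs <;> omega
  · rintro (⟨h₁, h₂⟩ | ⟨h₁, h₂⟩)
    · exact ⟨(-z - 1).toNat, by omega, by rw [if_pos (by omega)]; omega⟩
    · exact ⟨l + (z - 1).toNat, by omega, by rw [if_neg (by omega)]; omega⟩

lemma concatW_wtNeg_wtPos (T : ℕ → ℕ → ℤ) (i : ℕ) :
    concatW l (wtNeg τ τs T) (wtPos τ τs T) i =
      {p : ℕ × ℕ | InShape τ τs p.1 p.2 ∧ T p.1 p.2 = letter l i}.ncard := by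
  unfold concatW letter wtNeg wtPos
  split_ifs <;> rfl

lemma sum_concatW_wtNeg_wtPos (hτ : Antitone τ) (hR : ∀ i, R ≤ i → τ i = 0)
    (T : ℕ → ℕ → ℤ) (k : ℕ) :
    ∑ i ∈ range k, concatW l (wtNeg τ τs T) (wtPos τ τs T) i =
      #{p ∈ range R ×ˢ range (τ 0) | InShape τ τs p.1 p.2 ∧ T p.1 p.2 ∈ lowLetters l k} := by
  rw [card_eq_sum_card_fiberwise (f := fun p => T p.1 p.2) (t := lowLetters l k)
    fun p hp => (mem_filter.1 hp).2.2, lowLetters, sum_image fun a _ b _ h => letter_injective h]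
  refine sum_congr rfl fun i hi => ?_
  rw [concatW_wtNeg_wtPos, ncard_eq_card_filter_product hτ hR fun p h => h.1, filter_filter]
  refine congrArg card (filter_congr fun p _ => ⟨fun h => ⟨⟨h.1, ?_⟩, h.2⟩, fun h => ⟨h.1.1, h.2⟩⟩)
  rw [h.2]
  exact mem_image_of_mem _ hi

lemma card_filter_product_eq_sum_rows (s t : Finset ℕ) (P : ℕ × ℕ → Prop) [DecidablePred P] :
    #{p ∈ s ×ˢ t | P p} = ∑ i ∈ s, #{j ∈ t | P (i, j)} := by
  simp only [card_filter, sum_product]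

lemma card_filter_product_eq_sum_cols (s t : Finset ℕ) (P : ℕ × ℕ → Prop) [DecidablePred P] :
    #{p ∈ s ×ˢ t | P p} = ∑ j ∈ t, #{i ∈ s | P (i, j)} := by
  simp only [card_filter, sum_product_right]

end Counting

section Dominance

variable {l : ℕ} {τ τs : ℕ → ℕ} {T : ℕ → ℕ → ℤ} {R i j : ℕ}

lemma greatestT_eq_card (hR : ∀ i, R ≤ i → τ i = 0) (h : InShape τ τs i j)
    (hj : τs i + l ≤ j) :
    greatestT l τ τs i j = #{i' ∈ {i' ∈ range R | InShape τ τs i' j ∧ τs i' + l ≤ j} | i' ≤ i} := by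
  rw [greatestT, if_pos h, if_neg (by have := h.1; omega), ← Set.ncard_coe_finset]
  congr 2
  ext i'
  simp only [Set.mem_ofPred_eq, coe_filter, mem_filter, mem_range]
  constructor
  · rintro ⟨hi', h', hl⟩
    exact ⟨⟨h'.lt_of_eq_zero hR, h', by have := h'.1; omega⟩, hi'⟩
  · rintro ⟨⟨-, h', hl⟩, hi'⟩
    exact ⟨hi', h', by omega⟩

lemma card_row_neg_greatestT (hτ : Antitone τ) (hτs : IsPartition τs) {k : ℕ} (hk : k ≤ l)
    (i : ℕ) :
    #{j ∈ range (τ 0) | InShape τ τs i j ∧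
        -(k : ℤ) ≤ greatestT l τ τs i j ∧ greatestT l τ τs i j < 0} = min k (τ i - τs i) := by
  have hrow : {j ∈ range (τ 0) | InShape τ τs i j ∧
      -(k : ℤ) ≤ greatestT l τ τs i j ∧ greatestT l τ τs i j < 0} =
      Ico (τs i) (min (τ i) (τs i + k)) := by
    ext j
    simp only [mem_filter, mem_range, mem_Ico]
    constructor
    · rintro ⟨-, h, hk', hneg⟩
      rw [greatestT_of_lt h ((greatestT_neg_iff hτ hτs h).1 hneg)] at hk'
      have := h.1
      have := h.2
      omega
    · rintro ⟨h₁, h₂⟩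
      have h : InShape τ τs i j := ⟨h₁, by omega⟩
      have := hτ (Nat.zero_le i)
      rw [greatestT_of_lt h (by omega)]
      exact ⟨by omega, h, by omega, by omega⟩
  rw [hrow, Nat.card_Ico]
  omega

lemma card_col_greatestT (hτ : Antitone τ) (hτs : IsPartition τs) (hR : ∀ i, R ≤ i → τ i = 0)
    (j m : ℕ) :
    #{i ∈ range R | InShape τ τs i j ∧ ((-(l : ℤ) ≤ greatestT l τ τs i j ∧
        greatestT l τ τs i j < 0) ∨ (0 < greatestT l τ τs i j ∧ greatestT l τ τs i j ≤ m))} =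
      min #{i ∈ range R | InShape τ τs i j}
        (#{i ∈ range R | InShape τ τs i j ∧ j < τs i + l} + m) := by
  set P := {i ∈ range R | InShape τ τs i j ∧ τs i + l ≤ j} with hP
  have hpos : ∀ i, InShape τ τs i j → τs i + l ≤ j →
      ((-(l : ℤ) ≤ greatestT l τ τs i j ∧ greatestT l τ τs i j < 0) ∨
        (0 < greatestT l τ τs i j ∧ greatestT l τ τs i j ≤ m) ↔ #{i' ∈ P | i' ≤ i} ≤ m) := by
    intro i h hj
    have hrank := greatestT_eq_card (l := l) hR h hj
    have := (greatestT_pos_iff hτ hτs h).2 hj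
    rw [← hP] at hrank
    omega
  have hsplit : #{i ∈ range R | InShape τ τs i j ∧ ((-(l : ℤ) ≤ greatestT l τ τs i j ∧
        greatestT l τ τs i j < 0) ∨ (0 < greatestT l τ τs i j ∧ greatestT l τ τs i j ≤ m))} =
      #{i ∈ range R | InShape τ τs i j ∧ j < τs i + l} +
        #{i ∈ P | #{i' ∈ P | i' ≤ i} ≤ m} := by
    rw [← card_filter_add_card_filter_not (fun i => j < τs i + l), filter_filter, filter_filter,
      filter_filter]
    congr 2 <;> refine filter_congr fun i _ => ?_
    · refine ⟨fun h => ⟨h.1.1, h.2⟩, fun ⟨h, hj⟩ => ⟨⟨h, Or.inl ?_⟩, hj⟩⟩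
      rw [greatestT_of_lt h hj]
      have := h.1
      omega
    · rw [not_lt]
      exact ⟨fun ⟨⟨h, hv⟩, hj⟩ => ⟨⟨h, hj⟩, (hpos i h hj).1 hv⟩,
        fun ⟨⟨h, hj⟩, hm⟩ => ⟨⟨h, (hpos i h hj).2 hm⟩, hj⟩⟩
  have hcol : #{i ∈ range R | InShape τ τs i j} =
      #{i ∈ range R | InShape τ τs i j ∧ j < τs i + l} + #P := by
    rw [← card_filter_add_card_filter_not (fun i => j < τs i + l), filter_filter, filter_filter,
      filter_congr fun i _ => and_congr_right fun _ => not_lt]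
  rw [hsplit, hcol, card_filter_card_filter_le_le]
  omega

lemma card_lowLetters_le_of_le (hτ : Antitone τ) (hτs : IsPartition τs)
    (hT : IsSignedSSYT τ τs T) {k : ℕ} (hk : k ≤ l) :
    #{p ∈ range R ×ˢ range (τ 0) | InShape τ τs p.1 p.2 ∧ T p.1 p.2 ∈ lowLetters l k} ≤
      #{p ∈ range R ×ˢ range (τ 0) |
        InShape τ τs p.1 p.2 ∧ greatestT l τ τs p.1 p.2 ∈ lowLetters l k} := by
  have hmem : ∀ z, z ∈ lowLetters l k ↔ -(k : ℤ) ≤ z ∧ z < 0 := fun z => by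
    rw [mem_lowLetters]
    omega
  simp only [hmem, card_filter_product_eq_sum_rows]
  exact sum_le_sum fun i _ =>
    (hT.card_row_neg_le _ k i).trans_eq (card_row_neg_greatestT hτ hτs hk i).symm

lemma card_lowLetters_le_of_lt (hτ : Antitone τ) (hτs : IsPartition τs)
    (hR : ∀ i, R ≤ i → τ i = 0) (hT : IsSignedSSYT τ τs T)
    (hl : ∀ i j, InShape τ τs i j → T i j < 0 → -(l : ℤ) ≤ T i j) {k : ℕ} (hk : l < k) :
    #{p ∈ range R ×ˢ range (τ 0) | InShape τ τs p.1 p.2 ∧ T p.1 p.2 ∈ lowLetters l k} ≤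
      #{p ∈ range R ×ˢ range (τ 0) |
        InShape τ τs p.1 p.2 ∧ greatestT l τ τs p.1 p.2 ∈ lowLetters l k} := by
  have hmem : ∀ z, z ∈ lowLetters l k ↔
      (-(l : ℤ) ≤ z ∧ z < 0) ∨ (0 < z ∧ z ≤ ((k - l : ℕ) : ℤ)) := fun z => by
    rw [mem_lowLetters]
    omega
  simp only [hmem, card_filter_product_eq_sum_cols]
  exact sum_le_sum fun j _ =>
    (hT.card_col_le hτ hτs.antitone hl R j (k - l)).trans_eq
      (card_col_greatestT hτ hτs hR j (k - l)).symm

end Dominance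

end SignedTableau

open SignedTableau

theorem greatest_signed_weight_general (l : ℕ) (τ τs : ℕ → ℕ)
    (hτ : IsPartition τ) (hτs : IsPartition τs) :
    IsSignedSSYT τ τs (greatestT l τ τs) ∧
    IsPartition (wtNeg τ τs (greatestT l τ τs)) ∧
    IsPartition (wtPos τ τs (greatestT l τ τs)) ∧
    (∀ T : ℕ → ℕ → ℤ, IsSignedSSYT τ τs T →
      (∀ i j, InShape τ τs i j → T i j < 0 → -(l : ℤ) ≤ T i j) →
      Dom (concatW l (wtNeg τ τs T) (wtPos τ τs T))
        (concatW l (wtNeg τ τs (greatestT l τ τs)) (wtPos τ τs (greatestT l τ τs)))) := by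
  refine ⟨isSignedSSYT_greatestT hτ.antitone hτs, isPartition_wtNeg_greatestT hτ hτs,
    isPartition_wtPos_greatestT hτ hτs, fun T hT hl k => ?_⟩
  obtain ⟨R, hR⟩ := hτ.2
  rw [sum_concatW_wtNeg_wtPos hτ.antitone hR, sum_concatW_wtNeg_wtPos hτ.antitone hR]
  rcases le_or_gt k l with hk | hk
  · exact card_lowLetters_le_of_le hτ.antitone hτs hT hk
  · exact card_lowLetters_le_of_lt hτ.antitone hτs hR hT hl hk

/-- The greedily constructed tableau `t = t_l(τ/τs)` is a semistandard
signed tableau, its signed weight `(ω⁻, ω⁺)` consists of two partitions, and the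
(concatenated) signed weight of every semistandard signed tableau of shape `τ/τs` with
negative entries from `{-1, …, -l}` is dominated by that of `t`. -/
theorem greatest_signed_weight (l : ℕ) (τ τs : ℕ → ℕ)
    (hτ : IsPartition τ) (hτs : IsPartition τs) (hsub : ∀ i, τs i ≤ τ i) :
    IsSignedSSYT τ τs (greatestT l τ τs) ∧
    IsPartition (wtNeg τ τs (greatestT l τ τs)) ∧
    IsPartition (wtPos τ τs (greatestT l τ τs)) ∧
    (∀ T : ℕ → ℕ → ℤ, IsSignedSSYT τ τs T →
      (∀ i j, InShape τ τs i j → T i j < 0 → -(l : ℤ) ≤ T i j) →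
      Dom (concatW l (wtNeg τ τs T) (wtPos τ τs T))
        (concatW l (wtNeg τ τs (greatestT l τ τs)) (wtPos τ τs (greatestT l τ τs)))) :=
  greatest_signed_weight_general l τ τs hτ hτs
end

section
/- Fix ℓ⁻ ∈ ℕ and a skew partition τ/τ*. Let (ω⁻, ω⁺) be the signed weight of the greatest semistandard signed tableau t_{ℓ⁻}(τ/τ*) (the one maximizing first the number of −1's, then −2's, ..., then −ℓ⁻'s, then 1's, then 2's, etc.). Then ω⁻_{ℓ⁻} ≥ ℓ(ω⁺) whenever ℓ⁻ ≥ 1; equivalently, ⟨ω⁻, ω⁺⟩ is the ℓ⁻-decomposition of a partition. -/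
open scoped Classical

/-- The skew shape is a finite set of boxes. -/
lemma shape_finite (τ τs : ℕ → ℕ) (hτ : IsPartition τ) :
    {p : ℕ × ℕ | InShape τ τs p.1 p.2}.Finite := by
  obtain ⟨N, hN⟩ := hτ.2
  apply Set.Finite.subset ((Set.finite_Iio N).prod (Set.finite_Iio (τ 0)))
  rintro ⟨i, j⟩ hp
  obtain ⟨h1, h2⟩ : τs i ≤ j ∧ j < τ i := hp
  constructor
  · simp only [Set.mem_Iio]
    by_contra h
    push_neg at h
    have := hN i h
    omega
  · have := hτ.1 0 i (Nat.zero_le _)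
    simp only [Set.mem_Iio]
    omega

/-- Characterization of negative entries of `greatestT`. -/
lemma neg_entry (l : ℕ) (τ τs : ℕ → ℕ) {i j k : ℕ}
    (hin : InShape τ τs i j) (h : greatestT l τ τs i j = -((k : ℤ) + 1)) :
    j - τs i < l ∧ j - τs i = k := by
  unfold greatestT at h
  rw [if_pos hin] at h
  by_cases hc : j - τs i < l
  · rw [if_pos hc] at h
    have hji : τs i ≤ j := hin.1
    refine ⟨hc, ?_⟩
    have : (j : ℤ) - (τs i : ℤ) = k := by linarith
    omega
  · rw [if_neg hc] at h
    have : (0 : ℤ) ≤ (Set.ncard {i' : ℕ | i' ≤ i ∧ InShape τ τs i' j ∧ l ≤ j - τs i'} : ℤ) :=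
      Int.natCast_nonneg _
    omega

/-- Characterization of positive entries of `greatestT`. -/
lemma pos_entry (l : ℕ) (τ τs : ℕ → ℕ) {i j k : ℕ}
    (hin : InShape τ τs i j) (h : greatestT l τ τs i j = (k : ℤ) + 1) :
    l ≤ j - τs i ∧
      Set.ncard {i' : ℕ | i' ≤ i ∧ InShape τ τs i' j ∧ l ≤ j - τs i'} = k + 1 := by
  unfold greatestT at h
  rw [if_pos hin] at h
  by_cases hc : j - τs i < l
  · rw [if_pos hc] at h
    have hji : τs i ≤ j := hin.1
    exfalso
    have h1 : (0 : ℤ) ≤ (j : ℤ) - (τs i : ℤ) := by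
      have : (τs i : ℤ) ≤ (j : ℤ) := Int.ofNat_le.mpr hji
      linarith
    have h2 : (0 : ℤ) ≤ (k : ℤ) := Int.natCast_nonneg _
    linarith
  · rw [if_neg hc] at h
    refine ⟨Nat.le_of_not_lt hc, ?_⟩
    have : ((Set.ncard {i' : ℕ | i' ≤ i ∧ InShape τ τs i' j ∧ l ≤ j - τs i'} : ℕ) : ℤ)
        = ((k + 1 : ℕ) : ℤ) := by push_cast; linarith
    exact_mod_cast this

/-- Key lemma: any occurring positive value `k+1` forces at least `k+1` entries
equal to `-l`. -/
lemma pos_forces_neg (l : ℕ) (τ τs : ℕ → ℕ)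
    (hτ : IsPartition τ) (hl : 1 ≤ l) {k : ℕ}
    (hk : wtPos τ τs (greatestT l τ τs) k ≠ 0) :
    k + 1 ≤ wtNeg τ τs (greatestT l τ τs) (l - 1) := by
  -- get a witness box
  have hne : {p : ℕ × ℕ | InShape τ τs p.1 p.2 ∧
      greatestT l τ τs p.1 p.2 = (k : ℤ) + 1}.Nonempty := by
    rw [Set.nonempty_iff_ne_empty]
    intro h
    apply hk
    unfold wtPos
    rw [h, Set.ncard_empty]
  obtain ⟨⟨i, j⟩, hin, hval⟩ := hne
  obtain ⟨hlj, hcard⟩ := pos_entry l τ τs hin hval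
  set A : Set ℕ := {i' : ℕ | i' ≤ i ∧ InShape τ τs i' j ∧ l ≤ j - τs i'} with hA
  set W : Set (ℕ × ℕ) := {p : ℕ × ℕ | InShape τ τs p.1 p.2 ∧
      greatestT l τ τs p.1 p.2 = -(((l - 1 : ℕ) : ℤ) + 1)} with hW
  have hWfin : W.Finite := by
    apply Set.Finite.subset (shape_finite τ τs hτ)
    rintro ⟨a, b⟩ ⟨h1, _⟩
    exact h1
  -- the map i' ↦ (i', τs i' + (l-1))
  have hmap : ∀ i' ∈ A, (i', τs i' + (l - 1)) ∈ W := by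
    rintro i' ⟨hle, hin', hlen⟩
    have hji' : τs i' ≤ j := hin'.1
    have hjτ : j < τ i' := hin'.2
    have hlt : τs i' + (l - 1) < τ i' := by omega
    have hinbox : InShape τ τs i' (τs i' + (l - 1)) := ⟨Nat.le_add_right _ _, hlt⟩
    refine ⟨hinbox, ?_⟩
    unfold greatestT
    rw [if_pos hinbox, if_pos (by omega : τs i' + (l - 1) - τs i' < l)]
    have : ((τs i' + (l - 1) : ℕ) : ℤ) = (τs i' : ℤ) + ((l - 1 : ℕ) : ℤ) := by push_cast; ring
    rw [this]
    ring
  have hinj : Set.InjOn (fun i' => (i', τs i' + (l - 1))) A := by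
    intro a _ b _ hab
    exact (Prod.mk.injEq _ _ _ _).mp hab |>.1
  have hsub : (fun i' => (i', τs i' + (l - 1))) '' A ⊆ W := by
    rintro _ ⟨i', hi', rfl⟩
    exact hmap i' hi'
  calc k + 1 = A.ncard := hcard.symm
    _ = ((fun i' => (i', τs i' + (l - 1))) '' A).ncard :=
        (Set.ncard_image_of_injOn hinj).symm
    _ ≤ W.ncard := Set.ncard_le_ncard hsub hWfin
    _ = wtNeg τ τs (greatestT l τ τs) (l - 1) := rfl

/-- Let `(ω⁻, ω⁺)` be the signed weight of the greatest semistandard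
signed tableau `t_l(τ/τs)`.  Then `ℓ(ω⁻) ≤ l` and `ω⁻_l ≥ ℓ(ω⁺)` whenever `l ≥ 1`;
equivalently, `⟨ω⁻, ω⁺⟩` is the `l`-decomposition of a partition. -/
theorem greatest_weight_is_decomposition (l : ℕ) (τ τs : ℕ → ℕ)
    (hτ : IsPartition τ) (hτs : IsPartition τs) (hsub : ∀ i, τs i ≤ τ i) :
    lenFn (wtNeg τ τs (greatestT l τ τs)) ≤ l ∧
    (1 ≤ l →
      lenFn (wtPos τ τs (greatestT l τ τs)) ≤ wtNeg τ τs (greatestT l τ τs) (l - 1)) := by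
  constructor
  · -- ℓ(ω⁻) ≤ l
    unfold lenFn
    have hsub' : {k : ℕ | wtNeg τ τs (greatestT l τ τs) k ≠ 0} ⊆ Set.Iio l := by
      intro k hk
      have hne : {p : ℕ × ℕ | InShape τ τs p.1 p.2 ∧
          greatestT l τ τs p.1 p.2 = -((k : ℤ) + 1)}.Nonempty := by
        rw [Set.nonempty_iff_ne_empty]
        intro h
        apply hk
        unfold wtNeg
        rw [h, Set.ncard_empty]
      obtain ⟨⟨i, j⟩, hin, hval⟩ := hne
      obtain ⟨h1, h2⟩ := neg_entry l τ τs hin hval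
      simp only [Set.mem_Iio]
      omega
    calc {k : ℕ | wtNeg τ τs (greatestT l τ τs) k ≠ 0}.ncard
        ≤ (Set.Iio l).ncard := Set.ncard_le_ncard hsub' (Set.finite_Iio l)
      _ = l := by
          rw [← Nat.card_coe_set_eq, Nat.card_eq_card_toFinset,
            Set.toFinset_Iio, Nat.card_Iio]
  · -- ω⁻_{l-1} ≥ ℓ(ω⁺)
    intro hl
    unfold lenFn
    have hsub' : {k : ℕ | wtPos τ τs (greatestT l τ τs) k ≠ 0} ⊆
        Set.Iio (wtNeg τ τs (greatestT l τ τs) (l - 1)) := by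
      intro k hk
      have := pos_forces_neg l τ τs hτ hl hk
      simp only [Set.mem_Iio]
      omega
    calc {k : ℕ | wtPos τ τs (greatestT l τ τs) k ≠ 0}.ncard
        ≤ (Set.Iio (wtNeg τ τs (greatestT l τ τs) (l - 1))).ncard :=
          Set.ncard_le_ncard hsub' (Set.finite_Iio _)
      _ = wtNeg τ τs (greatestT l τ τs) (l - 1) := by
          rw [← Nat.card_coe_set_eq, Nat.card_eq_card_toFinset,
            Set.toFinset_Iio, Nat.card_Iio]
end

section
/- For M ≥ 1, the number of plethystic semistandard tableaux of outer shape (M,M,M,M), inner shape (2,1), and weight (6M, 4M, 2M) (all entries positive) is exactly M+1. Consequently the plethysm coefficient ⟨s_{(M,M,M,M)} ∘ s_{(2,1)}, s_{(6M,4M,2M)}⟩ equals M+1 for all M ≥ 0, and in particular is unbounded. -/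
open scoped Classical

/-- A semistandard tableau of skew shape `τ/τs` with positive entries: weakly increasing
along rows, strictly increasing down columns, zero off the shape. -/
def IsSkewSSYT (τ τs : ℕ → ℕ) (t : ℕ → ℕ → ℕ) : Prop :=
  (∀ i j, InShape τ τs i j → 1 ≤ t i j) ∧
  (∀ i j, ¬ InShape τ τs i j → t i j = 0) ∧
  (∀ i j, InShape τ τs i j → InShape τ τs i (j + 1) → t i j ≤ t i (j + 1)) ∧
  (∀ i j, InShape τ τs i j → InShape τ τs (i + 1) j → t i j < t (i + 1) j)

/-- The skew Schur function `s_{τ/τs}` as a power series in the variables `x_0, x_1, …`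
(the tableau entry `k+1` corresponds to the variable `k`): the generating function of
semistandard tableaux of shape `τ/τs` counted by weight. -/
noncomputable def skewSchur (τ τs : ℕ → ℕ) : MvPowerSeries ℕ ℚ :=
  fun m : ℕ →₀ ℕ =>
    (Nat.card {t : ℕ → ℕ → ℕ // IsSkewSSYT τ τs t ∧
      ∀ k : ℕ, Set.ncard {p : ℕ × ℕ | t p.1 p.2 = k + 1} = m k} : ℚ)

/-- The Schur function `s_f` of a partition `f`. -/
noncomputable def schurPS (f : ℕ → ℕ) : MvPowerSeries ℕ ℚ := skewSchur f (fun _ => 0)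

/-- The elementary symmetric function `e_k`. -/
noncomputable def eK (k : ℕ) : MvPowerSeries ℕ ℚ :=
  fun m : ℕ →₀ ℕ => if (∀ i, m i ≤ 1) ∧ (m.sum fun _ v => v) = k then 1 else 0

/-- The complete homogeneous symmetric function `h_k`. -/
noncomputable def hK (k : ℕ) : MvPowerSeries ℕ ℚ :=
  fun m : ℕ →₀ ℕ => if (m.sum fun _ v => v) = k then 1 else 0
/-- `colCount t e j`: the number of entries equal to `e` in column `j` of `t`. -/
noncomputable def colCount (t : ℕ → ℕ → ℕ) (e j : ℕ) : ℕ :=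
  Set.ncard {i : ℕ | t i j = e}

/-- The colexicographic order on tableaux with positive entries: `s < t` iff, considering
the largest entry `e` whose column multiplicities differ, in the rightmost column `j`
where the multiplicity of `e` differs, the multiplicity is smaller in `s`. -/
def ColexLt (s t : ℕ → ℕ → ℕ) : Prop :=
  ∃ e j : ℕ, 1 ≤ e ∧ colCount s e j < colCount t e j ∧
    (∀ j' : ℕ, j < j' → colCount s e j' = colCount t e j') ∧
    (∀ e' j' : ℕ, e < e' → colCount s e' j' = colCount t e' j')

/-- A plethystic semistandard tableau of outer shape `ρ` and inner shape `τ/τs` (all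
entries positive): each outer box carries a semistandard inner tableau, the inner tableaux
weakly increase along outer rows and strictly increase down outer columns with respect to
the colexicographic order. -/
def IsPlethSSYT (ρ τ τs : ℕ → ℕ) (P : ℕ → ℕ → ℕ → ℕ → ℕ) : Prop :=
  (∀ a b, b < ρ a → IsSkewSSYT τ τs (P a b)) ∧
  (∀ a b, ¬ b < ρ a → P a b = fun _ _ => 0) ∧
  (∀ a b, b + 1 < ρ a → (ColexLt (P a b) (P a (b + 1)) ∨ P a b = P a (b + 1))) ∧
  (∀ a b, b < ρ a → b < ρ (a + 1) → ColexLt (P a b) (P (a + 1) b))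

/-- The number of entries equal to `k+1` in a plethystic tableau. -/
noncomputable def plethWeight (P : ℕ → ℕ → ℕ → ℕ → ℕ) (k : ℕ) : ℕ :=
  Set.ncard {q : (ℕ × ℕ) × ℕ × ℕ | P q.1.1 q.1.2 q.2.1 q.2.2 = k + 1}

/-- The plethysm `s_ρ ∘ s_{τ/τs}`: the generating function of plethystic semistandard
tableaux of outer shape `ρ` and inner shape `τ/τs` counted by weight. -/
noncomputable def plethysmPS (ρ τ τs : ℕ → ℕ) : MvPowerSeries ℕ ℚ :=
  fun m : ℕ →₀ ℕ =>
    (Nat.card {P : ℕ → ℕ → ℕ → ℕ → ℕ //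
      IsPlethSSYT ρ τ τs P ∧ ∀ k : ℕ, plethWeight P k = m k} : ℚ)

/-- The outer shape `(M, M, M, M)`. -/
def outer4 (M : ℕ) : ℕ → ℕ := fun i => if i < 4 then M else 0

/-- The inner shape `(2, 1)`. -/
def mu21 : ℕ → ℕ := fun i => if i = 0 then 2 else if i = 1 then 1 else 0

/-- The weight `(6M, 4M, 2M)`. -/
def w642 (M : ℕ) : ℕ → ℕ :=
  fun i => if i = 0 then 6 * M else if i = 1 then 4 * M else if i = 2 then 2 * M else 0

/-!
A semistandard filling `T(a,b;c)` of `(2,1)` with entries in `{1,2,3}` is one of eight triples,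
and the colex order on them is decided by finitely many column counts. Checking every
colex-increasing chain of four of them shows that a column of the outer shape holds at most six
entries `1` and at least two entries `3`, with equality exactly for the columns
`S = (T(1,1;2), T(1,2;2), T(1,1;3), T(1,2;3))` and `T = (T(1,1;2), T(1,2;2), T(1,1;3), T(1,3;2))`.
Weight `(6M,4M,2M)` therefore forces every column to be `S` or `T`, and as `T(1,3;2)` is
colex-larger than `T(1,2;3)` the `S` columns come first: there are `M + 1` such tableaux.
The same column bounds show that no weight strictly dominating `(6M,4M,2M)` occurs, so by the
unitriangularity of Kostka numbers with respect to dominance the coefficient of `s_(6M,4M,2M)`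
is the number of tableaux of that weight.
-/

open Finset

theorem sum_mul_eq_ite_of_unitriangular {ι R : Type*} [Semiring R] (r : ι → ι → Prop)
    [IsStrictOrder ι r] {S : Finset ι} {c : ι → R} {A : ι → ι → R}
    (hdiag : ∀ f ∈ S, A f f = 1) (htri : ∀ f ∈ S, ∀ g, A f g ≠ 0 → g ≠ f → r g f) {w : ι}
    (hvan : ∀ g, r w g → ∑ f ∈ S, c f * A f g = 0) :
    ∑ f ∈ S, c f * A f w = if w ∈ S then c w else 0 := by
  have hsum : ∀ g, (∀ f ∈ S, r g f → c f = 0) →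
      ∑ f ∈ S, c f * A f g = if g ∈ S then c g else 0 := by
    intro g hg
    rw [← sum_ite_eq' S g c]
    refine sum_congr rfl fun f hf => ?_
    by_cases hfg : f = g
    · subst hfg; rw [hdiag f hf, mul_one, if_pos rfl]
    rw [if_neg hfg]
    by_cases hA : A f g = 0
    · rw [hA, mul_zero]
    · rw [hg f hf (htri f hf g hA (Ne.symm hfg)), zero_mul]
  refine hsum w fun f hf => ((S : Set ι).toFinite.wellFoundedOn (r := Function.swap r)).induction
    hf (P := fun f => r w f → c f = 0) fun g hg ih hwg => ?_
  have h := hsum g fun f hf hgf => ih f hf hgf (_root_.trans hwg hgf)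
  rwa [hvan g hwg, if_pos (mem_coe.1 hg), eq_comm] at h

theorem exists_iff_lt_of_antitone {p : ℕ → Prop} (hp : Antitone p) {M : ℕ} (hM : ¬ p M) :
    ∃ L ≤ M, ∀ b, p b ↔ b < L := by
  have h : ∃ n, ¬ p n := ⟨M, hM⟩
  refine ⟨Nat.find h, Nat.find_min' h hM, fun b => ⟨fun hb => ?_, fun hb => ?_⟩⟩
  · by_contra hL
    exact Nat.find_spec h (hp (not_lt.1 hL) hb)
  · exact not_not.1 (Nat.find_min h hb)

/-- Dominance `g ⊴ f`; the second clause says that `g` and `f` have the same (finite) size. -/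
def DominatedBy (g f : ℕ → ℕ) : Prop :=
  (∀ K, ∑ i ∈ range K, g i ≤ ∑ i ∈ range K, f i) ∧
    ∃ B, ∀ K, B ≤ K → ∑ i ∈ range K, g i = ∑ i ∈ range K, f i

def StrictlyDominatedBy (g f : ℕ → ℕ) : Prop := DominatedBy g f ∧ g ≠ f

namespace DominatedBy

variable {f g h : ℕ → ℕ}

theorem trans (hgf : DominatedBy g f) (hfh : DominatedBy f h) : DominatedBy g h := by
  obtain ⟨hle₁, B₁, hB₁⟩ := hgf
  obtain ⟨hle₂, B₂, hB₂⟩ := hfh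
  exact ⟨fun K => (hle₁ K).trans (hle₂ K),
    max B₁ B₂, fun K hK => (hB₁ K (le_of_max_le_left hK)).trans (hB₂ K (le_of_max_le_right hK))⟩

theorem antisymm (hgf : DominatedBy g f) (hfg : DominatedBy f g) : g = f := by
  have hsum : ∀ K, ∑ i ∈ range K, g i = ∑ i ∈ range K, f i :=
    fun K => (hgf.1 K).antisymm (hfg.1 K)
  funext i
  have := hsum (i + 1)
  rw [sum_range_succ, sum_range_succ, hsum i] at this
  omega

theorem sum_range_eq (h : DominatedBy f g) {n : ℕ} (hf : ∀ k, n ≤ k → f k = 0) {K : ℕ}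
    (hK : n ≤ K) : ∑ i ∈ range K, g i = ∑ i ∈ range n, f i := by
  obtain ⟨hle, B, hB⟩ := h
  have hf_const : ∀ K, n ≤ K → ∑ i ∈ range K, f i = ∑ i ∈ range n, f i := fun K hK =>
    (sum_subset (range_subset_range.2 hK) fun i _ hi => hf i (by simpa using hi)).symm
  refine le_antisymm ?_ ((hf_const K hK).symm.trans_le (hle K))
  calc ∑ i ∈ range K, g i ≤ ∑ i ∈ range (max B K), g i :=
        sum_le_sum_of_subset (range_subset_range.2 (le_max_right B K))
    _ = ∑ i ∈ range n, f i := by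
        rw [← hB _ (le_max_left B K), hf_const _ (hK.trans (le_max_right B K))]

theorem eq_zero_of_le (h : DominatedBy f g) {n : ℕ} (hf : ∀ k, n ≤ k → f k = 0) {k : ℕ}
    (hk : n ≤ k) : g k = 0 := by
  have := h.sum_range_eq hf (hk.trans k.le_succ)
  rw [sum_range_succ, h.sum_range_eq hf hk] at this
  omega

end DominatedBy

instance : IsStrictOrder (ℕ → ℕ) StrictlyDominatedBy where
  irrefl _ h := h.2 rfl
  trans _ _ _ h₁ h₂ := ⟨h₁.1.trans h₂.1, fun h => h₁.2 (h₁.1.antisymm (h ▸ h₂.1))⟩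

noncomputable def kostka (f g : ℕ → ℕ) : ℕ :=
  Nat.card {t : ℕ → ℕ → ℕ // IsSkewSSYT f (fun _ => 0) t ∧
    ∀ k : ℕ, Set.ncard {p : ℕ × ℕ | t p.1 p.2 = k + 1} = g k}

theorem coeff_schurPS (f : ℕ → ℕ) (m : ℕ →₀ ℕ) :
    MvPowerSeries.coeff m (schurPS f) = kostka f m := rfl

def youngCells (f : ℕ → ℕ) (N : ℕ) : Finset (ℕ × ℕ) :=
  (range N).biUnion fun i => {i} ×ˢ range (f i)

theorem mem_youngCells {f : ℕ → ℕ} {N : ℕ} {p : ℕ × ℕ} :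
    p ∈ youngCells f N ↔ p.1 < N ∧ p.2 < f p.1 := by
  obtain ⟨i, j⟩ := p
  simp [youngCells]

theorem card_youngCells (f : ℕ → ℕ) (N : ℕ) : #(youngCells f N) = ∑ i ∈ range N, f i := by
  rw [youngCells, card_biUnion]
  · simp
  · intro i _ i' _ hii'
    simp only [disjoint_left, mem_product, mem_singleton]
    exact fun p hp hp' => hii' (hp.1.symm.trans hp'.1)

theorem inShape_zero_iff {f : ℕ → ℕ} {i j : ℕ} : InShape f (fun _ => 0) i j ↔ j < f i := by
  simp [InShape]

def rowTableau (f : ℕ → ℕ) : ℕ → ℕ → ℕ := fun i j => if j < f i then i + 1 else 0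

namespace IsSkewSSYT

variable {f : ℕ → ℕ} {t : ℕ → ℕ → ℕ}

theorem succ_le (ht : IsSkewSSYT f (fun _ => 0) t) (hf : Antitone f) :
    ∀ i j, j < f i → i + 1 ≤ t i j := by
  intro i
  induction i with
  | zero => exact fun j hj => ht.1 0 j (inShape_zero_iff.2 hj)
  | succ i ih =>
    intro j hj
    have hj' : j < f i := hj.trans_le (hf i.le_succ)
    have := ht.2.2.2 i j (inShape_zero_iff.2 hj') (inShape_zero_iff.2 hj)
    have := ih j hj'
    omega

theorem ncard_eq_card_filter (ht : IsSkewSSYT f (fun _ => 0) t) {N : ℕ}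
    (hN : ∀ i, N ≤ i → f i = 0) {v : ℕ} (hv : v ≠ 0) :
    Set.ncard {p : ℕ × ℕ | t p.1 p.2 = v} = #((youngCells f N).filter fun p => t p.1 p.2 = v) := by
  rw [← Set.ncard_coe_finset]
  congr 1
  ext ⟨i, j⟩
  simp only [Set.mem_ofPred_eq, coe_filter, mem_youngCells]
  refine ⟨fun h => ⟨?_, h⟩, fun h => h.2⟩
  have hj : j < f i := by
    by_contra hj
    exact hv (h ▸ ht.2.1 i j (mt inShape_zero_iff.1 hj))
  exact ⟨by by_contra hi; rw [hN i (by omega)] at hj; omega, hj⟩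

theorem sum_weight_eq_card (ht : IsSkewSSYT f (fun _ => 0) t) {N : ℕ}
    (hN : ∀ i, N ≤ i → f i = 0) (K : ℕ) :
    ∑ k ∈ range K, Set.ncard {p : ℕ × ℕ | t p.1 p.2 = k + 1} =
      #((youngCells f N).filter fun p => t p.1 p.2 ≤ K) := by
  induction K with
  | zero =>
    rw [sum_range_zero, eq_comm, card_eq_zero, filter_eq_empty_iff]
    intro p hp
    have := ht.1 p.1 p.2 (inShape_zero_iff.2 (mem_youngCells.1 hp).2)
    omega
  | succ K ih =>
    rw [sum_range_succ, ih, ht.ncard_eq_card_filter hN K.succ_ne_zero,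
      ← card_union_of_disjoint (disjoint_filter.2 fun _ _ h₁ h₂ => by omega), ← filter_or]
    exact congrArg card (filter_congr fun _ _ => by omega)

theorem filter_le_subset (ht : IsSkewSSYT f (fun _ => 0) t) (hf : Antitone f) (N K : ℕ) :
    (youngCells f N).filter (fun p => t p.1 p.2 ≤ K) ⊆ youngCells f K := by
  intro p hp
  simp only [mem_filter, mem_youngCells] at hp ⊢
  have := ht.succ_le hf p.1 p.2 hp.1.2
  exact ⟨by omega, hp.1.2⟩

theorem dominatedBy (ht : IsSkewSSYT f (fun _ => 0) t) (hf : IsPartition f) {g : ℕ → ℕ}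
    (hg : ∀ k, Set.ncard {p : ℕ × ℕ | t p.1 p.2 = k + 1} = g k) : DominatedBy g f := by
  obtain ⟨hmono, N, hN⟩ := hf
  obtain rfl : g = fun k => Set.ncard {p : ℕ × ℕ | t p.1 p.2 = k + 1} := funext fun k => (hg k).symm
  simp only [DominatedBy, ht.sum_weight_eq_card hN]
  refine ⟨fun K => (card_le_card (ht.filter_le_subset hmono N K)).trans_eq
    (card_youngCells f K), N + (youngCells f N).sup (fun p => t p.1 p.2), fun K hK => ?_⟩
  rw [filter_true_of_mem fun p hp => (le_sup (f := fun p => t p.1 p.2) hp).trans (by omega),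
    card_youngCells]
  exact sum_subset (range_subset_range.2 (by omega)) fun i _ hi => hN i (by simpa using hi)

theorem eq_rowTableau (ht : IsSkewSSYT f (fun _ => 0) t) (hf : IsPartition f)
    (hw : ∀ k, Set.ncard {p : ℕ × ℕ | t p.1 p.2 = k + 1} = f k) : t = rowTableau f := by
  obtain ⟨hmono, N, hN⟩ := hf
  -- the cells with entry `≤ K` lie in the first `K` rows and are as many as those
  have hfilter : ∀ K, (youngCells f N).filter (fun p => t p.1 p.2 ≤ K) = youngCells f K := by
    intro K
    refine eq_of_subset_of_card_le (ht.filter_le_subset hmono N K) ?_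
    rw [← ht.sum_weight_eq_card hN, card_youngCells]
    simp only [hw, le_refl]
  funext i j
  by_cases hj : j < f i
  · have hle : t i j ≤ i + 1 := by
      have : (i, j) ∈ youngCells f (i + 1) := mem_youngCells.2 ⟨i.lt_succ_self, hj⟩
      rw [← hfilter, mem_filter] at this
      exact this.2
    have := ht.succ_le hmono i j hj
    simp only [rowTableau, if_pos hj]
    omega
  · rw [ht.2.1 i j (mt inShape_zero_iff.1 hj), rowTableau, if_neg hj]

end IsSkewSSYT

theorem isSkewSSYT_rowTableau {f : ℕ → ℕ} (hf : Antitone f) :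
    IsSkewSSYT f (fun _ => 0) (rowTableau f) := by
  refine ⟨?_, ?_, ?_, ?_⟩ <;> intro i j <;> simp only [inShape_zero_iff, rowTableau]
  · intro h; simp [h]
  · intro h; simp [h]
  · intro h₁ h₂; simp [h₁, h₂]
  · intro h₁ h₂; have := hf i.le_succ; simp [h₁, h₂]

theorem ncard_rowTableau_eq (f : ℕ → ℕ) (k : ℕ) :
    Set.ncard {p : ℕ × ℕ | rowTableau f p.1 p.2 = k + 1} = f k := by
  have : {p : ℕ × ℕ | rowTableau f p.1 p.2 = k + 1} = ↑(({k} : Finset ℕ) ×ˢ range (f k)) := by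
    ext ⟨i, j⟩
    simp only [Set.mem_ofPred_eq, rowTableau, coe_product, coe_singleton, coe_range,
      Set.mem_prod, Set.mem_singleton_iff, Set.mem_Iio]
    split_ifs with h
    · rw [Nat.add_right_cancel_iff]
      exact ⟨fun hik => ⟨hik, hik ▸ h⟩, And.left⟩
    · exact ⟨False.elim, fun ⟨hik, h'⟩ => absurd (hik ▸ h') h⟩
  rw [this, Set.ncard_coe_finset, card_product, card_singleton, card_range, one_mul]

theorem kostka_self {f : ℕ → ℕ} (hf : IsPartition f) : kostka f f = 1 := by
  rw [kostka, Nat.card_eq_one_iff_exists]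
  refine ⟨⟨rowTableau f, isSkewSSYT_rowTableau hf.1, ncard_rowTableau_eq f⟩, ?_⟩
  rintro ⟨t, ht, hw⟩
  exact Subtype.ext (ht.eq_rowTableau hf hw)

theorem dominatedBy_of_kostka_ne_zero {f g : ℕ → ℕ} (hf : IsPartition f) (h : kostka f g ≠ 0) :
    DominatedBy g f := by
  obtain ⟨⟨t, ht, hw⟩⟩ := (Nat.card_ne_zero.1 h).1
  exact ht.dominatedBy hf hw

/-- `tab21 (a, b, c)` is the filling `T(a,b;c)` of `(2,1)`: first row `a b`, second row `c`. -/
def tab21 (v : ℕ × ℕ × ℕ) : ℕ → ℕ → ℕ := fun i j =>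
  if i = 0 ∧ j = 0 then v.1 else if i = 0 ∧ j = 1 then v.2.1
  else if i = 1 ∧ j = 0 then v.2.2 else 0

theorem inShape_mu21 {i j : ℕ} :
    InShape mu21 (fun _ => 0) i j ↔ i = 0 ∧ j = 0 ∨ i = 0 ∧ j = 1 ∨ i = 1 ∧ j = 0 := by
  rcases i with _ | _ | i <;> simp [InShape, mu21, Nat.le_one_iff_eq_zero_or_eq_one]

theorem isSkewSSYT_tab21_iff {v : ℕ × ℕ × ℕ} :
    IsSkewSSYT mu21 (fun _ => 0) (tab21 v) ↔ 1 ≤ v.1 ∧ v.1 ≤ v.2.1 ∧ v.1 < v.2.2 := by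
  have h₀₀ : InShape mu21 (fun _ => 0) 0 0 := inShape_mu21.2 (by simp)
  constructor
  · intro ht
    exact ⟨ht.1 0 0 h₀₀, ht.2.2.1 0 0 h₀₀ (inShape_mu21.2 (by simp)),
      ht.2.2.2 0 0 h₀₀ (inShape_mu21.2 (by simp))⟩
  obtain ⟨a, b, c⟩ := v
  rintro ⟨h₁, h₂, h₃⟩
  refine ⟨fun i j h => ?_, fun i j h => ?_, fun i j h h' => ?_, fun i j h h' => ?_⟩ <;>
    rw [inShape_mu21] at h
  · rcases h with ⟨rfl, rfl⟩ | ⟨rfl, rfl⟩ | ⟨rfl, rfl⟩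
    exacts [h₁, h₁.trans h₂, (h₁.trans_lt h₃).le]
  · simp only [tab21]
    split_ifs <;> tauto
  · rw [inShape_mu21] at h'
    obtain ⟨rfl, rfl⟩ : i = 0 ∧ j = 0 := by omega
    exact h₂
  · rw [inShape_mu21] at h'
    obtain ⟨rfl, rfl⟩ : i = 0 ∧ j = 0 := by omega
    exact h₃

theorem IsSkewSSYT.eq_tab21 {t : ℕ → ℕ → ℕ} (ht : IsSkewSSYT mu21 (fun _ => 0) t) :
    t = tab21 (t 0 0, t 0 1, t 1 0) := by
  funext i j
  by_cases h : InShape mu21 (fun _ => 0) i j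
  · rw [inShape_mu21] at h
    rcases h with ⟨rfl, rfl⟩ | ⟨rfl, rfl⟩ | ⟨rfl, rfl⟩ <;> rfl
  · rw [ht.2.1 i j h]
    rw [inShape_mu21] at h
    simp only [tab21]
    split_ifs <;> tauto

def colCount21 (v : ℕ × ℕ × ℕ) (e j : ℕ) : ℕ :=
  (if tab21 v 0 j = e then 1 else 0) + (if tab21 v 1 j = e then 1 else 0)

theorem colCount_tab21 (v : ℕ × ℕ × ℕ) {e : ℕ} (he : e ≠ 0) (j : ℕ) :
    colCount (tab21 v) e j = colCount21 v e j := by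
  have : {i : ℕ | tab21 v i j = e} = ↑(({0, 1} : Finset ℕ).filter fun i => tab21 v i j = e) := by
    ext i
    simp only [Set.mem_ofPred_eq, coe_filter, mem_insert, mem_singleton]
    refine ⟨fun h => ⟨?_, h⟩, fun h => h.2⟩
    by_contra hi
    exact he (h ▸ by simp only [tab21]; split_ifs <;> omega)
  rw [colCount, this, Set.ncard_coe_finset, card_filter, sum_pair zero_ne_one, colCount21]

/-- `ColexLt` on fillings of `(2,1)` with entries at most `3`, with all quantifiers bounded. -/
def ColexLt21 (s t : ℕ × ℕ × ℕ) : Prop :=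
  ∃ e ∈ Icc 1 3, ∃ j ∈ range 2, colCount21 s e j < colCount21 t e j ∧
    (∀ j' ∈ Ioc j 1, colCount21 s e j' = colCount21 t e j') ∧
    ∀ e' ∈ Ioc e 3, ∀ j' ∈ range 2, colCount21 s e' j' = colCount21 t e' j'

instance (s t : ℕ × ℕ × ℕ) : Decidable (ColexLt21 s t) := by
  unfold ColexLt21; infer_instance

def ValidTriple (v : ℕ × ℕ × ℕ) : Prop :=
  1 ≤ v.1 ∧ v.1 ≤ v.2.1 ∧ v.1 < v.2.2 ∧ v.2.1 ≤ 3 ∧ v.2.2 ≤ 3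

instance : DecidablePred ValidTriple := fun v => by unfold ValidTriple; infer_instance

theorem colCount21_eq_zero {v : ℕ × ℕ × ℕ} (hv : ValidTriple v) {e j : ℕ} (he : e ≠ 0)
    (h : 3 < e ∨ 2 ≤ j) : colCount21 v e j = 0 := by
  obtain ⟨h₁, h₂, -, h₄, h₅⟩ := hv
  simp only [colCount21, tab21]
  split_ifs <;> omega

theorem colexLt_tab21_iff {s t : ℕ × ℕ × ℕ} (hs : ValidTriple s) (ht : ValidTriple t) :
    ColexLt (tab21 s) (tab21 t) ↔ ColexLt21 s t := by
  constructor
  · rintro ⟨e, j, he, hlt, hj, he'⟩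
    have he0 : e ≠ 0 := by omega
    rw [colCount_tab21 _ he0, colCount_tab21 _ he0] at hlt
    have he3 : e ≤ 3 := by
      by_contra h
      rw [colCount21_eq_zero ht he0 (Or.inl (by omega))] at hlt; omega
    have hj1 : j < 2 := by
      by_contra h
      rw [colCount21_eq_zero ht he0 (Or.inr (by omega))] at hlt; omega
    refine ⟨e, mem_Icc.2 ⟨he, he3⟩, j, mem_range.2 hj1, hlt, fun j' hj' => ?_,
      fun e' he'' j' _ => ?_⟩
    · rw [← colCount_tab21 _ he0, ← colCount_tab21 _ he0]; exact hj j' (mem_Ioc.1 hj').1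
    · have : e' ≠ 0 := by have := (mem_Ioc.1 he'').1; omega
      rw [← colCount_tab21 _ this, ← colCount_tab21 _ this]; exact he' e' j' (mem_Ioc.1 he'').1
  · rintro ⟨e, he, j, hj, hlt, hj', he'⟩
    obtain ⟨he1, he3⟩ := mem_Icc.1 he
    have he0 : e ≠ 0 := by omega
    refine ⟨e, j, he1, by rwa [colCount_tab21 _ he0, colCount_tab21 _ he0], fun j'' hj'' => ?_,
      fun e'' j'' he'' => ?_⟩
    · rw [colCount_tab21 _ he0, colCount_tab21 _ he0]
      by_cases h : j'' ≤ 1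
      · exact hj' j'' (mem_Ioc.2 ⟨hj'', h⟩)
      · rw [colCount21_eq_zero hs he0 (Or.inr (by omega)),
          colCount21_eq_zero ht he0 (Or.inr (by omega))]
    · have he0' : e'' ≠ 0 := by omega
      rw [colCount_tab21 _ he0', colCount_tab21 _ he0']
      by_cases h : e'' ≤ 3 ∧ j'' < 2
      · exact he' e'' (mem_Ioc.2 ⟨he'', h.1⟩) j'' (mem_range.2 h.2)
      · have h' : 3 < e'' ∨ 2 ≤ j'' := by omega
        rw [colCount21_eq_zero hs he0' h', colCount21_eq_zero ht he0' h']

def entryCount (v : ℕ × ℕ × ℕ) (e : ℕ) : ℕ :=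
  (if v.1 = e then 1 else 0) + (if v.2.1 = e then 1 else 0) + (if v.2.2 = e then 1 else 0)

def validTriples : Finset (ℕ × ℕ × ℕ) :=
  {(1, 1, 2), (1, 1, 3), (1, 2, 2), (1, 2, 3), (1, 3, 2), (1, 3, 3), (2, 2, 3), (2, 3, 3)}

theorem mem_validTriples {v : ℕ × ℕ × ℕ} (hv : ValidTriple v) : v ∈ validTriples := by
  obtain ⟨a, b, c⟩ := v
  obtain ⟨h₁, h₂, h₃, h₄, h₅⟩ := hv
  dsimp only at *
  have : a ≤ 3 := by omega
  interval_cases a <;> interval_cases b <;> interval_cases c <;> decide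

def columnS : List (ℕ × ℕ × ℕ) := [(1, 1, 2), (1, 2, 2), (1, 1, 3), (1, 2, 3)]

def columnT : List (ℕ × ℕ × ℕ) := [(1, 1, 2), (1, 2, 2), (1, 1, 3), (1, 3, 2)]

def columnCount (col : List (ℕ × ℕ × ℕ)) (e : ℕ) : ℕ := (col.map (entryCount · e)).sum

theorem columnCount_bounds_of_chain : ∀ v₀ ∈ validTriples, ∀ v₁ ∈ validTriples, ∀ v₂ ∈ validTriples,
    ∀ v₃ ∈ validTriples, ColexLt21 v₀ v₁ → ColexLt21 v₁ v₂ → ColexLt21 v₂ v₃ →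
      columnCount [v₀, v₁, v₂, v₃] 1 ≤ 6 ∧ 2 ≤ columnCount [v₀, v₁, v₂, v₃] 3 ∧
      (columnCount [v₀, v₁, v₂, v₃] 1 = 6 → columnCount [v₀, v₁, v₂, v₃] 3 = 2 →
        [v₀, v₁, v₂, v₃] = columnS ∨ [v₀, v₁, v₂, v₃] = columnT) := by
  decide

theorem outer4_lt_iff {M a b : ℕ} : b < outer4 M a ↔ a < 4 ∧ b < M := by
  unfold outer4; split_ifs <;> omega

theorem w642_eq_zero (M : ℕ) {k : ℕ} (hk : 3 ≤ k) : w642 M k = 0 := by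
  unfold w642; split_ifs <;> omega

theorem forall_eq_w642_iff {M : ℕ} {g : ℕ → ℕ} :
    (∀ k, g k = w642 M k) ↔ g 0 = 6 * M ∧ g 1 = 4 * M ∧ g 2 = 2 * M ∧ ∀ k, 3 ≤ k → g k = 0 := by
  refine ⟨fun h => ⟨h 0, h 1, h 2, fun k hk => (h k).trans (w642_eq_zero M hk)⟩, ?_⟩
  rintro ⟨h₀, h₁, h₂, h₃⟩ (_ | _ | _ | k)
  exacts [h₀, h₁, h₂, (h₃ _ (by omega)).trans (w642_eq_zero M (by omega)).symm]

def innerTriple (P : ℕ → ℕ → ℕ → ℕ → ℕ) (a b : ℕ) : ℕ × ℕ × ℕ :=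
  (P a b 0 0, P a b 0 1, P a b 1 0)

def column (P : ℕ → ℕ → ℕ → ℕ → ℕ) (b : ℕ) : List (ℕ × ℕ × ℕ) :=
  [innerTriple P 0 b, innerTriple P 1 b, innerTriple P 2 b, innerTriple P 3 b]

/-- The boxes of the plethystic shape `(M,M,M,M) ∘ (2,1)`, as (outer box, inner box). -/
def plethCells (M : ℕ) : Finset ((ℕ × ℕ) × ℕ × ℕ) :=
  (range 4 ×ˢ range M) ×ˢ {(0, 0), (0, 1), (1, 0)}

namespace IsPlethSSYT

variable {M : ℕ} {P : ℕ → ℕ → ℕ → ℕ → ℕ}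

theorem mem_plethCells (hP : IsPlethSSYT (outer4 M) mu21 (fun _ => 0) P) {a b i j : ℕ}
    (h : P a b i j ≠ 0) : ((a, b), (i, j)) ∈ plethCells M := by
  have hb : b < outer4 M a := by
    by_contra hb
    exact h (by rw [hP.2.1 a b hb])
  have hij : InShape mu21 (fun _ => 0) i j := by
    by_contra hij
    exact h ((hP.1 a b hb).2.1 i j hij)
  rw [outer4_lt_iff] at hb
  rw [inShape_mu21] at hij
  simp only [plethCells, mem_product, mem_range, mem_insert, mem_singleton, Prod.mk.injEq]
  exact ⟨hb, hij⟩

theorem plethWeight_eq_card (hP : IsPlethSSYT (outer4 M) mu21 (fun _ => 0) P) (k : ℕ) :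
    plethWeight P k = #((plethCells M).filter fun q => P q.1.1 q.1.2 q.2.1 q.2.2 = k + 1) := by
  rw [plethWeight, ← Set.ncard_coe_finset, coe_filter]
  congr 1
  ext q
  exact ⟨fun h => ⟨hP.mem_plethCells (h ▸ k.succ_ne_zero), h⟩, fun h => h.2⟩

theorem plethWeight_eq_sum (hP : IsPlethSSYT (outer4 M) mu21 (fun _ => 0) P) (k : ℕ) :
    plethWeight P k = ∑ b ∈ range M, columnCount (column P b) (k + 1) := by
  rw [hP.plethWeight_eq_card, card_filter, plethCells, sum_product, sum_product, sum_comm]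
  refine sum_congr rfl fun b _ => ?_
  have hcell : ∀ a, ∑ p ∈ ({(0, 0), (0, 1), (1, 0)} : Finset (ℕ × ℕ)),
      (if P a b p.1 p.2 = k + 1 then 1 else 0) = entryCount (innerTriple P a b) (k + 1) := by
    intro a
    rw [sum_insert (by decide), sum_insert (by decide), sum_singleton, entryCount, add_assoc]
    rfl
  simp only [hcell, sum_range_succ, sum_range_zero, zero_add, columnCount, column, List.map_cons,
    List.map_nil, List.sum_cons, List.sum_nil, add_zero, add_assoc]

theorem le_three (hP : IsPlethSSYT (outer4 M) mu21 (fun _ => 0) P)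
    (hz : ∀ k, 3 ≤ k → plethWeight P k = 0) (a b i j : ℕ) : P a b i j ≤ 3 := by
  by_contra h
  have hmem : ((a, b), (i, j)) ∈ (plethCells M).filter
      fun q => P q.1.1 q.1.2 q.2.1 q.2.2 = P a b i j - 1 + 1 :=
    mem_filter.2 ⟨hP.mem_plethCells (by omega), by dsimp only; omega⟩
  have := hz (P a b i j - 1) (by omega)
  rw [hP.plethWeight_eq_card, card_eq_zero] at this
  simp [this] at hmem

theorem eq_tab21 (hP : IsPlethSSYT (outer4 M) mu21 (fun _ => 0) P) {a b : ℕ} (ha : a < 4)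
    (hb : b < M) : P a b = tab21 (innerTriple P a b) :=
  (hP.1 a b (outer4_lt_iff.2 ⟨ha, hb⟩)).eq_tab21

theorem validTriple (hP : IsPlethSSYT (outer4 M) mu21 (fun _ => 0) P)
    (hle : ∀ a b i j, P a b i j ≤ 3) {a b : ℕ} (ha : a < 4) (hb : b < M) :
    ValidTriple (innerTriple P a b) := by
  have h := hP.1 a b (outer4_lt_iff.2 ⟨ha, hb⟩)
  rw [hP.eq_tab21 ha hb, isSkewSSYT_tab21_iff] at h
  exact ⟨h.1, h.2.1, h.2.2, hle a b 0 1, hle a b 1 0⟩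

theorem colexLt21 (hP : IsPlethSSYT (outer4 M) mu21 (fun _ => 0) P)
    (hle : ∀ a b i j, P a b i j ≤ 3) {a b : ℕ} (ha : a < 3) (hb : b < M) :
    ColexLt21 (innerTriple P a b) (innerTriple P (a + 1) b) := by
  have h := hP.2.2.2 a b (outer4_lt_iff.2 ⟨by omega, hb⟩) (outer4_lt_iff.2 ⟨by omega, hb⟩)
  rw [hP.eq_tab21 (by omega) hb, hP.eq_tab21 (by omega) hb] at h
  exact (colexLt_tab21_iff (hP.validTriple hle (by omega) hb)
    (hP.validTriple hle (by omega) hb)).1 h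

theorem column_bounds (hP : IsPlethSSYT (outer4 M) mu21 (fun _ => 0) P)
    (hle : ∀ a b i j, P a b i j ≤ 3) {b : ℕ} (hb : b < M) :
    columnCount (column P b) 1 ≤ 6 ∧ 2 ≤ columnCount (column P b) 3 ∧
      (columnCount (column P b) 1 = 6 → columnCount (column P b) 3 = 2 →
        column P b = columnS ∨ column P b = columnT) :=
  columnCount_bounds_of_chain _ (mem_validTriples (hP.validTriple hle (by omega) hb))
    _ (mem_validTriples (hP.validTriple hle (by omega) hb))
    _ (mem_validTriples (hP.validTriple hle (by omega) hb))
    _ (mem_validTriples (hP.validTriple hle (by omega) hb))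
    (hP.colexLt21 hle (by omega) hb) (hP.colexLt21 hle (by omega) hb)
    (hP.colexLt21 hle (by omega) hb)

theorem plethWeight_bounds (hP : IsPlethSSYT (outer4 M) mu21 (fun _ => 0) P)
    (hle : ∀ a b i j, P a b i j ≤ 3) : plethWeight P 0 ≤ 6 * M ∧ 2 * M ≤ plethWeight P 2 := by
  rw [hP.plethWeight_eq_sum, hP.plethWeight_eq_sum, mul_comm 6, mul_comm 2]
  refine ⟨?_, ?_⟩
  · simpa using sum_le_sum fun b hb => (hP.column_bounds hle (mem_range.1 hb)).1
  · simpa using sum_le_sum fun b hb => (hP.column_bounds hle (mem_range.1 hb)).2.1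

theorem plethWeight_eq_w642_of_dominatedBy (hP : IsPlethSSYT (outer4 M) mu21 (fun _ => 0) P)
    (h : DominatedBy (w642 M) (plethWeight P)) : plethWeight P = w642 M := by
  have hz : ∀ k, 3 ≤ k → plethWeight P k = 0 := fun k hk =>
    h.eq_zero_of_le (fun _ => w642_eq_zero M) hk
  obtain ⟨hS, hT⟩ := hP.plethWeight_bounds (hP.le_three hz)
  have h₁ : 6 * M ≤ plethWeight P 0 := by simpa [w642] using h.1 1
  have h₂ : 6 * M + 4 * M ≤ plethWeight P 0 + plethWeight P 1 := by
    simpa [sum_range_succ, w642] using h.1 2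
  have h₃ : plethWeight P 0 + plethWeight P 1 + plethWeight P 2 = 6 * M + 4 * M + 2 * M := by
    simpa [sum_range_succ, w642] using h.sum_range_eq (fun _ => w642_eq_zero M) (le_refl 3)
  exact funext (forall_eq_w642_iff.2 ⟨by omega, by omega, by omega, hz⟩)

theorem column_eq_of_plethWeight_eq (hP : IsPlethSSYT (outer4 M) mu21 (fun _ => 0) P)
    (hw : plethWeight P = w642 M) {b : ℕ} (hb : b < M) :
    column P b = columnS ∨ column P b = columnT := by
  have hle := hP.le_three fun k hk => by rw [hw]; exact w642_eq_zero M hk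
  have h₁ := (sum_eq_sum_iff_of_le fun b hb => (hP.column_bounds hle (mem_range.1 hb)).1).1
    (by rw [← hP.plethWeight_eq_sum, hw]; simp [w642, mul_comm])
  have h₃ := (sum_eq_sum_iff_of_le fun b hb => (hP.column_bounds hle (mem_range.1 hb)).2.1).1
    (by rw [← hP.plethWeight_eq_sum, hw]; simp [w642, mul_comm])
  exact (hP.column_bounds hle hb).2.2 (h₁ b (mem_range.2 hb)) (h₃ b (mem_range.2 hb)).symm

end IsPlethSSYT

theorem innerTriple_eq_getD {P : ℕ → ℕ → ℕ → ℕ → ℕ} {a : ℕ} (ha : a < 4) (b : ℕ) :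
    innerTriple P a b = (column P b).getD a 0 := by
  interval_cases a <;> rfl

def plethTableau (M L : ℕ) : ℕ → ℕ → ℕ → ℕ → ℕ := fun a b =>
  if a < 4 ∧ b < M then tab21 ((if b < L then columnS else columnT).getD a 0) else fun _ _ => 0

theorem column_plethTableau {M L b : ℕ} (hb : b < M) :
    column (plethTableau M L) b = if b < L then columnS else columnT := by
  unfold column innerTriple plethTableau
  split_ifs <;> first | rfl | omega

theorem IsPlethSSYT.exists_eq_plethTableau {M : ℕ} {P : ℕ → ℕ → ℕ → ℕ → ℕ}
    (hP : IsPlethSSYT (outer4 M) mu21 (fun _ => 0) P) (hw : plethWeight P = w642 M) :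
    ∃ L ≤ M, P = plethTableau M L := by
  have hcol := fun b (hb : b < M) => hP.column_eq_of_plethWeight_eq hw hb
  -- a column `T` cannot precede a column `S`, since `T(1,3;2)` is colex-larger than `T(1,2;3)`
  have hp : Antitone fun b => b < M ∧ column P b = columnS := by
    refine antitone_nat_of_succ_le fun b ⟨hb, hS⟩ => ⟨by omega, ?_⟩
    refine (hcol b (by omega)).resolve_right fun hT => ?_
    have hrow := hP.2.2.1 3 b (outer4_lt_iff.2 ⟨by omega, hb⟩)
    rw [hP.eq_tab21 (by omega) (by omega), hP.eq_tab21 (by omega) hb,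
      innerTriple_eq_getD (by omega), innerTriple_eq_getD (by omega), hT, hS] at hrow
    rcases hrow with hlt | heq
    · exact absurd ((colexLt_tab21_iff (by decide) (by decide)).1 hlt) (by decide)
    · exact absurd (congrFun (congrFun heq 0) 1) (by decide)
  obtain ⟨L, hLM, hL⟩ := exists_iff_lt_of_antitone hp (fun h => lt_irrefl M h.1)
  refine ⟨L, hLM, funext fun a => funext fun b => ?_⟩
  by_cases hab : a < 4 ∧ b < M
  · rw [hP.eq_tab21 hab.1 hab.2, plethTableau, if_pos hab, innerTriple_eq_getD hab.1]
    congr 2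
    by_cases hbL : b < L
    · rw [if_pos hbL, ((hL b).2 hbL).2]
    · rw [if_neg hbL]
      exact (hcol b hab.2).resolve_left fun hS => hbL ((hL b).1 ⟨hab.2, hS⟩)
  · rw [hP.2.1 a b (mt outer4_lt_iff.1 hab), plethTableau, if_neg hab]

theorem isPlethSSYT_plethTableau (M L : ℕ) :
    IsPlethSSYT (outer4 M) mu21 (fun _ => 0) (plethTableau M L) := by
  have hvalid : ∀ col ∈ [columnS, columnT], ∀ a < 4, ValidTriple (col.getD a 0) := by decide
  have hcolex : ∀ col ∈ [columnS, columnT], ∀ a < 3,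
      ColexLt21 (col.getD a 0) (col.getD (a + 1) 0) := by decide
  have hST : ∀ a < 4, ColexLt21 (columnS.getD a 0) (columnT.getD a 0) ∨
      columnS.getD a 0 = columnT.getD a 0 := by decide
  have hmem : ∀ b, (if b < L then columnS else columnT) ∈ [columnS, columnT] := by
    intro b; split_ifs <;> simp
  refine ⟨fun a b hb => ?_, fun a b hb => ?_, fun a b hb => ?_, fun a b hb hb' => ?_⟩
  · rw [outer4_lt_iff] at hb
    rw [plethTableau, if_pos hb, isSkewSSYT_tab21_iff]
    obtain ⟨h₁, h₂, h₃, -⟩ := hvalid _ (hmem b) a hb.1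
    exact ⟨h₁, h₂, h₃⟩
  · rw [plethTableau, if_neg (mt outer4_lt_iff.2 hb)]
  · rw [outer4_lt_iff] at hb
    simp only [plethTableau, if_pos hb, if_pos (show a < 4 ∧ b < M from ⟨hb.1, by omega⟩)]
    by_cases h : b + 1 < L
    · rw [if_pos h, if_pos (show b < L by omega)]; exact Or.inr rfl
    by_cases h' : b < L
    · rw [if_pos h', if_neg h]
      exact (hST a hb.1).imp ((colexLt_tab21_iff (hvalid _ (by simp) a hb.1)
        (hvalid _ (by simp) a hb.1)).2) (congrArg tab21)
    · rw [if_neg h, if_neg h']; exact Or.inr rfl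
  · rw [outer4_lt_iff] at hb hb'
    simp only [plethTableau, if_pos hb, if_pos hb']
    exact (colexLt_tab21_iff (hvalid _ (hmem b) a hb.1) (hvalid _ (hmem b) (a + 1) hb'.1)).2
      (hcolex _ (hmem b) a (by omega))

theorem columnCount_columnT : columnCount columnT = columnCount columnS := by
  funext e
  simp only [columnCount, columnS, columnT, entryCount, List.map_cons, List.map_nil, List.sum_cons,
    List.sum_nil]
  omega

theorem columnCount_columnS (M k : ℕ) : M * columnCount columnS (k + 1) = w642 M k := by
  rcases k with _ | _ | _ | k <;> simp [columnCount, columnS, entryCount, w642, mul_comm]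

theorem plethWeight_plethTableau (M L : ℕ) : plethWeight (plethTableau M L) = w642 M := by
  funext k
  rw [(isPlethSSYT_plethTableau M L).plethWeight_eq_sum, ← columnCount_columnS,
    sum_congr rfl fun b hb => by
      rw [column_plethTableau (mem_range.1 hb), apply_ite (columnCount · (k + 1)),
        columnCount_columnT, ite_self],
    sum_const, card_range, smul_eq_mul]

theorem plethTableau_injOn (M : ℕ) : Set.InjOn (plethTableau M) (Set.Iic M) := by
  intro L hL L' hL' h
  by_contra hne
  wlog hlt : L < L' generalizing L L'
  · exact this hL' hL h.symm (Ne.symm hne) (by omega)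
  rw [Set.mem_Iic] at hL hL'
  have := congrFun (congrFun (congrFun (congrFun h 3) L) 0) 1
  simp [plethTableau, show L < M by omega, hlt, columnS, columnT, tab21] at this

noncomputable def plethCount (ρ τ τs g : ℕ → ℕ) : ℕ :=
  Nat.card {P : ℕ → ℕ → ℕ → ℕ → ℕ // IsPlethSSYT ρ τ τs P ∧ ∀ k, plethWeight P k = g k}

theorem coeff_plethysmPS (ρ τ τs : ℕ → ℕ) (m : ℕ →₀ ℕ) :
    MvPowerSeries.coeff m (plethysmPS ρ τ τs) = plethCount ρ τ τs m := rfl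

theorem plethCount_w642 (M : ℕ) : plethCount (outer4 M) mu21 (fun _ => 0) (w642 M) = M + 1 := by
  have hbij : Function.Bijective fun L : Fin (M + 1) =>
      (⟨plethTableau M L, isPlethSSYT_plethTableau M L,
        congrFun (plethWeight_plethTableau M L)⟩ :
        {P // IsPlethSSYT (outer4 M) mu21 (fun _ => 0) P ∧ ∀ k, plethWeight P k = w642 M k}) := by
    refine ⟨fun L L' h => Fin.ext (plethTableau_injOn M (Set.mem_Iic.2 (by omega))
      (Set.mem_Iic.2 (by omega)) (congrArg Subtype.val h)), fun ⟨P, hP, hw⟩ => ?_⟩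
    obtain ⟨L, hL, rfl⟩ := hP.exists_eq_plethTableau (funext hw)
    exact ⟨⟨L, by omega⟩, rfl⟩
  rw [plethCount, ← Nat.card_eq_of_bijective _ hbij, Nat.card_eq_fintype_card, Fintype.card_fin]

theorem plethCount_eq_zero_of_strictlyDominatedBy {M : ℕ} {g : ℕ → ℕ}
    (hg : StrictlyDominatedBy (w642 M) g) : plethCount (outer4 M) mu21 (fun _ => 0) g = 0 := by
  refine Nat.card_eq_zero.2 (Or.inl ⟨fun ⟨P, hP, hw⟩ => hg.2 ?_⟩)
  obtain rfl : g = plethWeight P := funext fun k => (hw k).symm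
  exact (hP.plethWeight_eq_w642_of_dominatedBy hg.1).symm

theorem plethCount_eq_sum_kostka {ρ τ τs : ℕ → ℕ} {S : Finset (ℕ → ℕ)} {c : (ℕ → ℕ) → ℚ}
    (hEq : plethysmPS ρ τ τs = ∑ f ∈ S, c f • schurPS f) {g : ℕ → ℕ} {N : ℕ}
    (hg : ∀ k, N ≤ k → g k = 0) : (plethCount ρ τ τs g : ℚ) = ∑ f ∈ S, c f * kostka f g := by
  have hfin : (Function.support g).Finite :=
    (Set.finite_lt_nat N).subset fun k hk => by by_contra h; exact hk (hg k (not_lt.1 h))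
  have := congrArg (MvPowerSeries.coeff (Finsupp.ofSupportFinite g hfin)) hEq
  simpa [map_sum, coeff_schurPS, coeff_plethysmPS, Finsupp.ofSupportFinite_coe] using this

/-- For `M ≥ 1` there are exactly `M + 1` plethystic semistandard
tableaux of outer shape `(M,M,M,M)`, inner shape `(2,1)` and weight `(6M, 4M, 2M)`;
consequently the coefficient of `s_{(6M,4M,2M)}` in (any Schur expansion of)
`s_{(M,M,M,M)} ∘ s_{(2,1)}` equals `M + 1` for all `M ≥ 0`; in particular it is
unbounded. -/
theorem plethysm_unbounded_multiplicity :
    (∀ M : ℕ, 1 ≤ M →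
      Nat.card {P : ℕ → ℕ → ℕ → ℕ → ℕ //
        IsPlethSSYT (outer4 M) mu21 (fun _ => 0) P ∧
        plethWeight P 0 = 6 * M ∧ plethWeight P 1 = 4 * M ∧ plethWeight P 2 = 2 * M ∧
        ∀ k : ℕ, 3 ≤ k → plethWeight P k = 0} = M + 1) ∧
    (∀ M : ℕ, ∀ S : Finset (ℕ → ℕ), (∀ f ∈ S, IsPartition f) →
      ∀ c : (ℕ → ℕ) → ℚ,
        plethysmPS (outer4 M) mu21 (fun _ => 0) = ∑ f ∈ S, c f • schurPS f →
        w642 M ∈ S ∧ c (w642 M) = M + 1) := by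
  refine ⟨fun M _ => ?_, fun M S hS c hEq => ?_⟩
  · rw [← plethCount_w642 M, plethCount]
    exact Nat.card_congr (Equiv.subtypeEquivRight fun P => and_congr_right' forall_eq_w642_iff.symm)
  have hvan : ∀ g, StrictlyDominatedBy (w642 M) g → ∑ f ∈ S, c f * (kostka f g : ℚ) = 0 := by
    intro g hg
    rw [← plethCount_eq_sum_kostka hEq fun _ => hg.1.eq_zero_of_le fun _ => w642_eq_zero M,
      plethCount_eq_zero_of_strictlyDominatedBy hg, Nat.cast_zero]
  have hsum := plethCount_eq_sum_kostka hEq fun _ hk => w642_eq_zero M hk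
  rw [plethCount_w642, sum_mul_eq_ite_of_unitriangular StrictlyDominatedBy
    (fun f hf => by rw [kostka_self (hS f hf), Nat.cast_one])
    (fun f hf g hK hne => ⟨dominatedBy_of_kostka_ne_zero (hS f hf) (by exact_mod_cast hK), hne⟩)
    hvan] at hsum
  split_ifs at hsum with hw
  · exact ⟨hw, by exact_mod_cast hsum.symm⟩
  · exact absurd hsum (Nat.cast_ne_zero.2 M.succ_ne_zero)
end
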